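/- arXiv:2203.14149 — 9 statements merged into one kernel-verified Lean document; each statement's English description precedes it below -/
import Mathlib

section
/- For any integer n and integers r, s ≥ 0, the (q,π)-trinomial coefficient satisfies [n choose r,s]_{q,π} = π^s q^{s-r}·[n-1 choose r,s]_{q,π} + (πq)^{n-r}·[n-1 choose r-1,s]_{q,π} + q^{s-n}·[n-1 choose r,s-1]_{q,π}. -/
open scoped Classical

noncomputable section

/-- A concrete model of the ring `ℚ(q)^π := ℚ(q)[π]/(π² - 1)`: since `2` is
invertible, the Chinese Remainder Theorem (evaluating `π` at `±1`) identifies it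
with `ℚ(q) × ℚ(q)`, with `q = (q, q)` and `π = (1, -1)`. -/
abbrev Rqpi : Type := RatFunc ℚ × RatFunc ℚ

/-- The element `q` of `ℚ(q)^π`. -/
def qv : Rqpi := (RatFunc.X, RatFunc.X)

/-- The element `π` of `ℚ(q)^π`. -/
def piv : Rqpi := (1, -1)

/-- The `(q,π)`-integer `[n]_{q,π} = ((πq)^n - q^{-n}) / (πq - q^{-1})`. -/
def qint (n : ℤ) : Rqpi :=
  ((piv * qv) ^ n - qv ^ (-n)) / (piv * qv - qv ^ (-1 : ℤ))

/-- The `(q,π)`-factorial `[n]!_{q,π} = [n]_{q,π} [n-1]_{q,π} ⋯ [1]_{q,π}`. -/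
def qfact (n : ℕ) : Rqpi := ∏ i ∈ Finset.range n, qint ((i : ℤ) + 1)

/-- The `(q,π)`-binomial coefficient
`[n choose r]_{q,π} = [n]_{q,π} [n-1]_{q,π} ⋯ [n-r+1]_{q,π} / [r]!_{q,π}`,
with the convention that it is `0` for `r < 0`. -/
def qbinom (n r : ℤ) : Rqpi :=
  if r < 0 then 0
  else (∏ i ∈ Finset.range r.toNat, qint (n - (i : ℤ))) / qfact r.toNat


/-- The `(q,π)`-trinomial coefficient `[n choose r,s]_{q,π} = [n choose r]_{q,π} · [n-r choose s]_{q,π}`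
(it vanishes when `r < 0` or `s < 0`). -/
def qtrinom (n r s : ℤ) : Rqpi := qbinom n r * qbinom (n - r) s


/-!
Since `2` is invertible, `ℚ(q)^π ≅ ℚ(q) × ℚ(q)` with `π ↦ (1, -1)`, so on each factor the
`(q,π)`-integer becomes the two-parameter integer `[n]_{u,v} = (uⁿ - vⁿ)/(u - v)` with `u = ±q`
and `v = q⁻¹`. The splitting `[n] = v^r [n-r] + u^(n-r) [r]` gives the Pascal rule
`[n choose r] = v^r [n-1 choose r] + u^(n-r) [n-1 choose r-1]`, and the symmetry `u ↔ v` its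
mirror image. Expanding `[n choose r] [n-r choose s]` with the first rule on the left factor and
the mirror rule on the right one yields the trinomial recursion. Clearing the factorials is
legitimate because `u/v = ±q²` is not a root of unity.
-/

section UVCalculus

open Finset

variable {K : Type*} [Field K] (u v : K)

def uvInt (n : ℤ) : K := (u ^ n - v ^ n) / (u - v)

def uvDescFactorial (n : ℤ) (k : ℕ) : K := ∏ i ∈ range k, uvInt u v (n - i)

def uvFactorial (k : ℕ) : K := ∏ i ∈ range k, uvInt u v (i + 1)

def uvChoose (n r : ℤ) : K :=
  if r < 0 then 0 else uvDescFactorial u v n r.toNat / uvFactorial u v r.toNat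

def uvTrinom (n r s : ℤ) : K := uvChoose u v n r * uvChoose u v (n - r) s

lemma uvInt_comm (n : ℤ) : uvInt u v n = uvInt v u n := by
  rw [uvInt, uvInt, ← neg_sub, ← neg_sub v u, neg_div_neg_eq]

lemma uvChoose_comm (n r : ℤ) : uvChoose u v n r = uvChoose v u n r := by
  simp only [uvChoose, uvDescFactorial, uvFactorial, uvInt_comm u v]

lemma uvChoose_natCast (n : ℤ) (k : ℕ) :
    uvChoose u v n k = uvDescFactorial u v n k / uvFactorial u v k := by
  rw [uvChoose, if_neg (by omega), Int.toNat_natCast]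

lemma uvChoose_zero_right (n : ℤ) : uvChoose u v n 0 = 1 := by
  simp [uvChoose, uvDescFactorial, uvFactorial]

lemma uvChoose_neg_one_right (n : ℤ) : uvChoose u v n (-1) = 0 := by
  simp [uvChoose]

lemma uvDescFactorial_succ (n : ℤ) (k : ℕ) :
    uvDescFactorial u v n (k + 1) = uvInt u v n * uvDescFactorial u v (n - 1) k := by
  rw [uvDescFactorial, prod_range_succ', mul_comm, Nat.cast_zero, sub_zero, uvDescFactorial]
  congr 1
  refine prod_congr rfl fun i _ => ?_
  push_cast
  ring_nf

lemma uvDescFactorial_succ' (n : ℤ) (k : ℕ) :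
    uvDescFactorial u v n (k + 1) = uvDescFactorial u v n k * uvInt u v (n - k) :=
  prod_range_succ _ _

lemma uvFactorial_succ (k : ℕ) :
    uvFactorial u v (k + 1) = uvFactorial u v k * uvInt u v (k + 1) :=
  prod_range_succ _ _

variable {u v}

lemma uvInt_eq_add (hu : u ≠ 0) (hv : v ≠ 0) (n r : ℤ) :
    uvInt u v n = v ^ r * uvInt u v (n - r) + u ^ (n - r) * uvInt u v r := by
  simp only [uvInt, mul_div_assoc', ← add_div]
  congr 1
  rw [mul_sub, mul_sub, ← zpow_add₀ hv, ← zpow_add₀ hu]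
  ring_nf

lemma uvInt_natCast_ne_zero (huv : ∀ k : ℕ, 0 < k → u ^ k ≠ v ^ k) {k : ℕ} (hk : 0 < k) :
    uvInt u v k ≠ 0 := by
  have h1 := huv 1 one_pos
  rw [pow_one, pow_one] at h1
  rw [uvInt, zpow_natCast, zpow_natCast]
  exact div_ne_zero (sub_ne_zero.2 (huv k hk)) (sub_ne_zero.2 h1)

lemma uvFactorial_ne_zero (huv : ∀ k : ℕ, 0 < k → u ^ k ≠ v ^ k) (k : ℕ) :
    uvFactorial u v k ≠ 0 :=
  prod_ne_zero_iff.2 fun i _ => by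
    exact_mod_cast uvInt_natCast_ne_zero huv (Nat.succ_pos i)

lemma uvChoose_pascal (hu : u ≠ 0) (hv : v ≠ 0) (huv : ∀ k : ℕ, 0 < k → u ^ k ≠ v ^ k)
    (n r : ℤ) (hr : 0 ≤ r) :
    uvChoose u v n r =
      v ^ r * uvChoose u v (n - 1) r + u ^ (n - r) * uvChoose u v (n - 1) (r - 1) := by
  lift r to ℕ using hr
  cases r with
  | zero => simp [uvChoose_zero_right, uvChoose_neg_one_right]
  | succ k =>
    have hF := uvFactorial_ne_zero huv k
    have hI : uvInt u v (k + 1) ≠ 0 := by exact_mod_cast uvInt_natCast_ne_zero huv k.succ_pos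
    have hInt := uvInt_eq_add hu hv n (k + 1 : ℕ)
    have hsub : n - (k + 1 : ℕ) = n - 1 - k := by push_cast; ring
    rw [hsub] at hInt ⊢
    rw [show ((k + 1 : ℕ) : ℤ) - 1 = k by omega, uvChoose_natCast, uvChoose_natCast,
      uvChoose_natCast, uvDescFactorial_succ, uvDescFactorial_succ', uvFactorial_succ]
    push_cast at hInt ⊢
    field_simp
    linear_combination uvDescFactorial u v (n - 1) k * hInt

lemma uvChoose_pascal' (hu : u ≠ 0) (hv : v ≠ 0) (huv : ∀ k : ℕ, 0 < k → u ^ k ≠ v ^ k)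
    (n r : ℤ) (hr : 0 ≤ r) :
    uvChoose u v n r =
      u ^ r * uvChoose u v (n - 1) r + v ^ (n - r) * uvChoose u v (n - 1) (r - 1) := by
  simpa only [uvChoose_comm v u] using uvChoose_pascal hv hu (fun k hk => (huv k hk).symm) n r hr

theorem uvTrinom_pascal (hu : u ≠ 0) (hv : v ≠ 0) (huv : ∀ k : ℕ, 0 < k → u ^ k ≠ v ^ k)
    (n r s : ℤ) (hr : 0 ≤ r) (hs : 0 ≤ s) :
    uvTrinom u v n r s =
      u ^ s * v ^ r * uvTrinom u v (n - 1) r s + u ^ (n - r) * uvTrinom u v (n - 1) (r - 1) s +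
        v ^ (n - s) * uvTrinom u v (n - 1) r (s - 1) := by
  have hv_pow : v ^ r * v ^ (n - r - s) = v ^ (n - s) := by
    rw [← zpow_add₀ hv]; ring_nf
  have hA := uvChoose_pascal' hu hv huv (n - r) s hs
  rw [sub_right_comm n r 1] at hA
  simp only [uvTrinom]
  rw [uvChoose_pascal hu hv huv n r hr, sub_sub_sub_cancel_right]
  linear_combination v ^ r * uvChoose u v (n - 1) r * hA +
    uvChoose u v (n - 1) r * uvChoose u v (n - 1 - r) (s - 1) * hv_pow

end UVCalculus

section RationalFunctions

open RatFunc

variable {F : Type*} [Field F] {e : RatFunc F}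

lemma mul_X_pow_ne_inv_X_pow (he : e ^ 2 = 1) {k : ℕ} (hk : 0 < k) : (e * X) ^ k ≠ X⁻¹ ^ k := by
  intro h
  have hX : (X : RatFunc F) ≠ 0 := X_ne_zero
  have hX4 : X ^ (4 * k) = (1 : RatFunc F) :=
    calc X ^ (4 * k) = (e ^ 2) ^ k * X ^ (4 * k) := by rw [he, one_pow, one_mul]
      _ = ((e * X) ^ k * X ^ k) ^ 2 := by ring
      _ = 1 := by rw [h, ← mul_pow, inv_mul_cancel₀ hX, one_pow, one_pow]
  exact (transcendental_X (K := F)).pow (by omega : 0 < 4 * k) (hX4 ▸ isAlgebraic_one)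

theorem uvTrinom_mul_X_pascal (he : e ^ 2 = 1) (n r s : ℤ) (hr : 0 ≤ r) (hs : 0 ≤ s) :
    uvTrinom (e * X) X⁻¹ n r s =
      e ^ s * X ^ (s - r) * uvTrinom (e * X) X⁻¹ (n - 1) r s +
        (e * X) ^ (n - r) * uvTrinom (e * X) X⁻¹ (n - 1) (r - 1) s +
        X ^ (s - n) * uvTrinom (e * X) X⁻¹ (n - 1) r (s - 1) := by
  have hX : (X : RatFunc F) ≠ 0 := X_ne_zero
  have he0 : e ≠ 0 := by rintro rfl; simp at he
  have hu : (e * X) ^ s * X⁻¹ ^ r = e ^ s * X ^ (s - r) := by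
    rw [mul_zpow, inv_zpow', mul_assoc, ← zpow_add₀ hX, ← sub_eq_add_neg]
  have hv : (X⁻¹ : RatFunc F) ^ (n - s) = X ^ (s - n) := by rw [inv_zpow', neg_sub]
  rw [uvTrinom_pascal (mul_ne_zero he0 hX) (inv_ne_zero hX)
    (fun k hk => mul_X_pow_ne_inv_X_pow he hk) n r s hr hs, hu, hv]

end RationalFunctions

lemma Prod.fst_zpow {G H : Type*} [DivInvMonoid G] [DivInvMonoid H] (p : G × H) (n : ℤ) :
    (p ^ n).1 = p.1 ^ n := rfl

lemma Prod.snd_zpow {G H : Type*} [DivInvMonoid G] [DivInvMonoid H] (p : G × H) (n : ℤ) :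
    (p ^ n).2 = p.2 ^ n := rfl

lemma qtrinom_fst (n r s : ℤ) :
    (qtrinom n r s).1 = uvTrinom (1 * RatFunc.X) RatFunc.X⁻¹ n r s := by
  simp only [qtrinom, qbinom, qfact, qint, uvTrinom, uvChoose, uvDescFactorial, uvFactorial,
    uvInt, Prod.fst_mul, apply_ite Prod.fst, Prod.fst_div, Prod.fst_prod, Prod.fst_sub,
    Prod.fst_zpow, Prod.fst_zero, Prod.fst_inv, inv_zpow', zpow_neg_one, piv, qv]

lemma qtrinom_snd (n r s : ℤ) :
    (qtrinom n r s).2 = uvTrinom (-1 * RatFunc.X) RatFunc.X⁻¹ n r s := by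
  simp only [qtrinom, qbinom, qfact, qint, uvTrinom, uvChoose, uvDescFactorial, uvFactorial,
    uvInt, Prod.snd_mul, apply_ite Prod.snd, Prod.snd_div, Prod.snd_prod, Prod.snd_sub,
    Prod.snd_zpow, Prod.snd_zero, Prod.snd_inv, inv_zpow', zpow_neg_one, piv, qv]

/-- The Pascal-type recursion for `(q,π)`-trinomial coefficients. -/
theorem statement2 (n r s : ℤ) (hr : 0 ≤ r) (hs : 0 ≤ s) :
    qtrinom n r s =
      piv ^ s * qv ^ (s - r) * qtrinom (n - 1) r s +
        (piv * qv) ^ (n - r) * qtrinom (n - 1) (r - 1) s +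
        qv ^ (s - n) * qtrinom (n - 1) r (s - 1) := by
  refine Prod.ext ?_ ?_
  · simp only [Prod.fst_add, Prod.fst_mul, Prod.fst_zpow, qtrinom_fst, piv, qv]
    exact uvTrinom_mul_X_pascal (one_pow 2) n r s hr hs
  · simp only [Prod.snd_add, Prod.snd_mul, Prod.snd_zpow, qtrinom_snd, piv, qv]
    exact uvTrinom_mul_X_pascal neg_one_sq n r s hr hs
end
end

section
/- For any n ∈ ℤ and r ≥ 0, one has Σ_{s+t=r, s,t≥0} π^{binom(t,2)}·(-q)^{-t}·[n+s choose s,t]_{q,π} = (πq)^{nr}. -/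
open scoped Classical

noncomputable section

/-!
Replace `πq` and `q⁻¹` by elements `a, b` of a field, so that `[m] = (a^m - b^m) / (a - b)`; on
each factor of `ℚ(q)^π ≅ ℚ(q) × ℚ(q)` this is the case `a = ±q`, `b = q⁻¹`, `ab = π`.
For the series `G_n = ∑ₛ [n+s, s] xˢ` and `H_n = ∑ₜ (-1)ᵗ (ab)^(t choose 2) bᵗ [n, t] xᵗ` the
Pascal rule `[m, k] = aᵏ [m-1, k] + b^(m-k) [m-1, k-1]` gives
`(1 - bⁿ x) G_n(x) = G_{n-1}(a x)` and `H_n(x) = (1 - bⁿ x) H_{n-1}(a x)`.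
Hence `(G_n H_n)(x) = (G_{n-1} H_{n-1})(a x)`, and as `G_0 H_0 = 1 / (1 - x)`, we get
`G_n H_n = 1 / (1 - aⁿ x)` for every `n ∈ ℤ`; the identity is its coefficient of `x^r`.
-/

open Finset PowerSeries

section TwoParameter

variable {F : Type*} [Field F] (a b : F)

def abInt (m : ℤ) : F := (a ^ m - b ^ m) / (a - b)

def abFactorial (k : ℕ) : F := ∏ i ∈ range k, abInt a b (i + 1)

def abChoose (m k : ℤ) : F :=
  if k < 0 then 0 else (∏ i ∈ range k.toNat, abInt a b (m - i)) / abFactorial a b k.toNat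

variable {a b}

lemma abInt_zero : abInt a b 0 = 0 := by simp [abInt]

lemma abInt_add (ha : a ≠ 0) (hb : b ≠ 0) (m m' : ℤ) :
    abInt a b (m + m') = a ^ m' * abInt a b m + b ^ m * abInt a b m' := by
  simp only [abInt, zpow_add₀ ha, zpow_add₀ hb]
  ring

lemma abInt_natCast_add_one_ne_zero (hab : ∀ k : ℕ, 0 < k → a ^ k ≠ b ^ k) (k : ℕ) :
    abInt a b (k + 1) ≠ 0 := by
  have hk : a ^ (k + 1) ≠ b ^ (k + 1) := hab (k + 1) k.succ_pos
  have h1 : a ≠ b := by simpa using hab 1 one_pos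
  exact div_ne_zero (sub_ne_zero.2 (by exact_mod_cast hk)) (sub_ne_zero.2 h1)

lemma abFactorial_ne_zero (hab : ∀ k : ℕ, 0 < k → a ^ k ≠ b ^ k) (k : ℕ) :
    abFactorial a b k ≠ 0 :=
  prod_ne_zero_iff.2 fun i _ => abInt_natCast_add_one_ne_zero hab i

lemma abChoose_of_neg (m : ℤ) {k : ℤ} (hk : k < 0) : abChoose a b m k = 0 := if_pos hk

lemma abChoose_natCast (m : ℤ) (k : ℕ) :
    abChoose a b m k = (∏ i ∈ range k, abInt a b (m - i)) / abFactorial a b k := by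
  simp [abChoose]

lemma abChoose_zero_right (m : ℤ) : abChoose a b m 0 = 1 := by
  simpa [abFactorial] using abChoose_natCast (a := a) (b := b) m 0

lemma abChoose_self (hab : ∀ k : ℕ, 0 < k → a ^ k ≠ b ^ k) (r : ℕ) :
    abChoose a b r r = 1 := by
  have hprod : ∏ i ∈ range r, abInt a b (r - i) = abFactorial a b r := by
    rw [abFactorial, ← prod_range_reflect]
    refine prod_congr rfl fun i hi => ?_
    have := mem_range.1 hi
    congr 1
    omega
  rw [abChoose_natCast, hprod, div_self (abFactorial_ne_zero hab r)]

lemma abChoose_zero_left {t : ℕ} (ht : 0 < t) : abChoose a b 0 t = 0 := by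
  rw [abChoose_natCast, prod_eq_zero (mem_range.2 ht) (by simp [abInt_zero]), zero_div]

theorem abChoose_pascal (ha : a ≠ 0) (hb : b ≠ 0) (hab : ∀ k : ℕ, 0 < k → a ^ k ≠ b ^ k)
    (m k : ℤ) :
    abChoose a b m k
      = a ^ k * abChoose a b (m - 1) k + b ^ (m - k) * abChoose a b (m - 1) (k - 1) := by
  rcases lt_trichotomy k 0 with hk | rfl | hk
  · simp [abChoose_of_neg _ hk, abChoose_of_neg _ (show k - 1 < 0 by omega)]
  · simp [abChoose_zero_right, abChoose_of_neg _ (show (-1 : ℤ) < 0 by omega)]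
  obtain ⟨j, rfl⟩ : ∃ j : ℕ, k = j + 1 := ⟨(k - 1).toNat, by omega⟩
  have hprod : ∏ i ∈ range (j + 1), abInt a b (m - i)
      = (∏ i ∈ range j, abInt a b (m - 1 - i)) * abInt a b m := by
    rw [prod_range_succ']
    congr 1
    · exact prod_congr rfl fun i _ => by congr 1; push_cast; ring
    · simp
  have hsplit := abInt_add ha hb (m - 1 - j) (j + 1)
  rw [show m - 1 - j + (j + 1) = m by ring] at hsplit
  have hF := abFactorial_ne_zero hab j
  have hI := abInt_natCast_add_one_ne_zero hab j
  rw [show (j : ℤ) + 1 - 1 = (j : ℤ) by ring,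
    show (j : ℤ) + 1 = ((j + 1 : ℕ) : ℤ) by push_cast; ring, abChoose_natCast, abChoose_natCast,
    abChoose_natCast, hprod, prod_range_succ,
    abFactorial, prod_range_succ, ← abFactorial, hsplit]
  push_cast
  rw [show m - ((j : ℤ) + 1) = m - 1 - j by ring]
  field_simp

variable (a b)

def abNegBinomialSeries (n : ℤ) : PowerSeries F :=
  mk fun s : ℕ => abChoose a b (n + s) s

def abBinomialSeries (n : ℤ) : PowerSeries F :=
  mk fun t : ℕ => (-1) ^ t * (a * b) ^ t.choose 2 * b ^ t * abChoose a b n t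

variable {a b}

lemma coeff_one_sub_C_mul_X_mul_zero (c : F) (P : PowerSeries F) :
    coeff 0 ((1 - C c * X) * P) = coeff 0 P := by
  simp [sub_mul, mul_assoc]

lemma coeff_one_sub_C_mul_X_mul_succ (c : F) (P : PowerSeries F) (s : ℕ) :
    coeff (s + 1) ((1 - C c * X) * P) = coeff (s + 1) P - c * coeff s P := by
  simp [sub_mul, mul_assoc, coeff_succ_X_mul]

lemma abBinomialSeries_zero : abBinomialSeries a b 0 = 1 := by
  ext (_ | t)
  · simp [abBinomialSeries, abChoose_zero_right]
  · have h := abChoose_zero_left (a := a) (b := b) t.succ_pos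
    push_cast at h
    simp [abBinomialSeries, h]

lemma one_sub_C_mul_X_mul_abNegBinomialSeries (ha : a ≠ 0) (hb : b ≠ 0)
    (hab : ∀ k : ℕ, 0 < k → a ^ k ≠ b ^ k) (n : ℤ) :
    (1 - C (b ^ n) * X) * abNegBinomialSeries a b n
      = rescale a (abNegBinomialSeries a b (n - 1)) := by
  ext (_ | s)
  · simp [coeff_one_sub_C_mul_X_mul_zero, abNegBinomialSeries, abChoose_zero_right]
  · rw [coeff_one_sub_C_mul_X_mul_succ, coeff_rescale]
    simp only [abNegBinomialSeries, coeff_mk]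
    rw [abChoose_pascal ha hb hab (n + (s + 1 : ℕ))]
    push_cast
    rw [show n + (s + 1) - 1 = n + s by ring, show n + (s + 1) - (s + 1) = n by ring,
      show (s : ℤ) + 1 - 1 = s by ring, show n - 1 + (s + 1) = n + s by ring, ← zpow_natCast]
    push_cast
    ring

lemma abBinomialSeries_eq_one_sub_C_mul_X_mul_rescale (ha : a ≠ 0) (hb : b ≠ 0)
    (hab : ∀ k : ℕ, 0 < k → a ^ k ≠ b ^ k) (n : ℤ) :
    abBinomialSeries a b n = (1 - C (b ^ n) * X) * rescale a (abBinomialSeries a b (n - 1)) := by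
  ext (_ | t)
  · simp [coeff_one_sub_C_mul_X_mul_zero, abBinomialSeries, abChoose_zero_right]
  · rw [coeff_one_sub_C_mul_X_mul_succ, coeff_rescale, coeff_rescale]
    simp only [abBinomialSeries, coeff_mk]
    rw [abChoose_pascal ha hb hab n (t + 1 : ℕ), zpow_natCast]
    push_cast
    rw [show (t : ℤ) + 1 - 1 = t by ring, show n - ((t : ℤ) + 1) = n - t - 1 by ring,
      zpow_sub₀ hb, zpow_sub₀ hb, zpow_natCast, zpow_one, pow_succ, Nat.choose_succ_succ',
      Nat.choose_one_right]
    field_simp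
    ring

lemma abNegBinomialSeries_mul_abBinomialSeries (ha : a ≠ 0) (hb : b ≠ 0)
    (hab : ∀ k : ℕ, 0 < k → a ^ k ≠ b ^ k) (n : ℤ) :
    abNegBinomialSeries a b n * abBinomialSeries a b n
      = rescale a (abNegBinomialSeries a b (n - 1) * abBinomialSeries a b (n - 1)) := by
  rw [abBinomialSeries_eq_one_sub_C_mul_X_mul_rescale ha hb hab, mul_left_comm, ← mul_assoc,
    one_sub_C_mul_X_mul_abNegBinomialSeries ha hb hab, map_mul]

lemma coeff_abNegBinomialSeries_mul_abBinomialSeries (ha : a ≠ 0) (hb : b ≠ 0)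
    (hab : ∀ k : ℕ, 0 < k → a ^ k ≠ b ^ k) (n : ℤ) (r : ℕ) :
    coeff r (abNegBinomialSeries a b n * abBinomialSeries a b n) = a ^ (n * r) := by
  have hstep (m : ℤ) : coeff r (abNegBinomialSeries a b m * abBinomialSeries a b m)
      = a ^ (r : ℤ)
        * coeff r (abNegBinomialSeries a b (m - 1) * abBinomialSeries a b (m - 1)) := by
    rw [abNegBinomialSeries_mul_abBinomialSeries ha hb hab, coeff_rescale, zpow_natCast]
  induction n using Int.induction_on with
  | zero => simp [abBinomialSeries_zero, abNegBinomialSeries, abChoose_self hab]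
  | succ i ih =>
    rw [hstep, add_sub_cancel_right, ih, ← zpow_add₀ ha]
    congr 1
    ring
  | pred i ih =>
    apply mul_left_cancel₀ (zpow_ne_zero (r : ℤ) ha)
    rw [← hstep, ih, ← zpow_add₀ ha]
    congr 1
    ring

theorem sum_antidiagonal_abChoose_mul_abChoose (ha : a ≠ 0) (hb : b ≠ 0)
    (hab : ∀ k : ℕ, 0 < k → a ^ k ≠ b ^ k) (n : ℤ) (r : ℕ) :
    ∑ st ∈ antidiagonal r, (-1) ^ st.2 * (a * b) ^ st.2.choose 2 * b ^ st.2 *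
        (abChoose a b (n + st.1) st.1 * abChoose a b n st.2) = a ^ (n * r) := by
  rw [← coeff_abNegBinomialSeries_mul_abBinomialSeries ha hb hab, coeff_mul]
  refine sum_congr rfl fun st _ => ?_
  simp only [abNegBinomialSeries, abBinomialSeries, coeff_mk]
  ring

end TwoParameter

namespace RatFunc

lemma X_pow_ne_one {K : Type*} [Field K] {m : ℕ} (hm : 0 < m) : (X : RatFunc K) ^ m ≠ 1 := by
  intro h
  have h' : algebraMap (Polynomial K) (RatFunc K) (Polynomial.X ^ m)
      = algebraMap (Polynomial K) (RatFunc K) 1 := by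
    rwa [map_pow, algebraMap_X, map_one]
  have := congrArg Polynomial.natDegree (algebraMap_injective K h')
  rw [Polynomial.natDegree_X_pow, Polynomial.natDegree_one] at this
  omega

lemma mul_X_pow_ne_inv_X_pow {K : Type*} [Field K] {ε : RatFunc K} (hε : ε ^ 2 = 1) {k : ℕ}
    (hk : 0 < k) : (ε * X) ^ k ≠ (X⁻¹) ^ k := by
  intro h
  apply X_pow_ne_one (K := K) (m := 4 * k) (by omega)
  calc (X : RatFunc K) ^ (4 * k) = (ε ^ 2) ^ k * X ^ (4 * k) := by rw [hε, one_pow, one_mul]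
    _ = ((ε * X) ^ k * X ^ k) ^ 2 := by ring
    _ = 1 := by rw [h, ← mul_pow, inv_mul_cancel₀ X_ne_zero, one_pow, one_pow]

end RatFunc

section Components

variable (f : Rqpi →+* RatFunc ℚ)

lemma map_qint (hf : ∀ x, f x⁻¹ = (f x)⁻¹) (m : ℤ) :
    f (qint m) = abInt (f piv * f qv) (f qv)⁻¹ m := by
  simp only [qint, abInt, map_div' f hf, map_sub, map_mul, map_zpow' f hf, ← inv_zpow',
    zpow_one, hf]

lemma map_qbinom (hf : ∀ x, f x⁻¹ = (f x)⁻¹) (m k : ℤ) :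
    f (qbinom m k) = abChoose (f piv * f qv) (f qv)⁻¹ m k := by
  unfold qbinom abChoose
  split_ifs
  · exact map_zero f
  · simp only [map_div' f hf, map_prod, map_qint f hf, qfact, abFactorial]

lemma map_qtrinom_identity (hf : ∀ x, f x⁻¹ = (f x)⁻¹) (hπ : f piv ^ 2 = 1)
    (hq : f qv = RatFunc.X) (n : ℤ) (r : ℕ) :
    f (∑ st ∈ antidiagonal r, piv ^ (st.2.choose 2) * (-qv) ^ (-(st.2 : ℤ)) *
          qtrinom (n + (st.1 : ℤ)) (st.1 : ℤ) (st.2 : ℤ))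
      = f ((piv * qv) ^ (n * (r : ℤ))) := by
  have hq0 : f qv ≠ 0 := hq ▸ RatFunc.X_ne_zero
  have hπ0 : f piv ≠ 0 := by rintro h; simp [h] at hπ
  have hab : ∀ k : ℕ, 0 < k → (f piv * f qv) ^ k ≠ (f qv)⁻¹ ^ k := by
    rw [hq]
    exact fun k hk => RatFunc.mul_X_pow_ne_inv_X_pow hπ hk
  rw [map_zpow' f hf, map_mul,
    ← sum_antidiagonal_abChoose_mul_abChoose (mul_ne_zero hπ0 hq0) (inv_ne_zero hq0) hab, map_sum]
  refine sum_congr rfl fun st _ => ?_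
  rw [map_mul, map_mul, map_pow, map_zpow' f hf, map_neg, qtrinom, map_mul, map_qbinom f hf,
    map_qbinom f hf, add_sub_cancel_right, mul_inv_cancel_right₀ hq0, zpow_neg, zpow_natCast,
    neg_pow, mul_inv, ← inv_pow, inv_neg_one]
  ring

end Components

/-- For any `n ∈ ℤ` and `r ≥ 0`:
`∑_{s+t=r, s,t ≥ 0} π^{binom(t,2)} (-q)^{-t} [n+s choose s,t]_{q,π} = (πq)^{nr}`. -/
theorem statement3 (n : ℤ) (r : ℕ) :
    ∑ st ∈ Finset.HasAntidiagonal.antidiagonal r,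
        piv ^ (st.2.choose 2) * (-qv) ^ (-(st.2 : ℤ)) *
          qtrinom (n + (st.1 : ℤ)) (st.1 : ℤ) (st.2 : ℤ) =
      (piv * qv) ^ (n * (r : ℤ)) :=
  Prod.ext
    (map_qtrinom_identity (RingHom.fst _ _) (fun _ => rfl) (by simp [piv]) rfl n r)
    (map_qtrinom_identity (RingHom.snd _ _) (fun _ => rfl) (by simp [piv]) rfl n r)
end
end

section
/- For integers 0 ≤ r ≤ n, one has q^{(n-r)r}·[n choose r]_{q,π} = Σ_{s=0}^{r} (πq²)^{(n-r)(r-s)} · q^{(n-r-1)s} · [n-r+s-1 choose s]_{q,π}. -/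
/-!
Evaluating `π` at `1` and at `-1`, each component of `[n]_{q,π}` becomes the
`(p,p')`-integer `[n]_{p,p'} = (p ^ n - p' ^ n) / (p - p')` with `p = ±q` and `p' = q⁻¹`.
For these, the identity is the `(p,p')`-analogue
`[m + r choose r] = ∑_{s ≤ r} p ^ (m (r - s)) p' ^ s [m + s - 1 choose s]` of
the hockey-stick identity, proved by induction on `r` from the Pascal rule
`[m + r + 1 choose r + 1] = p ^ m [m + r choose r] + p' ^ (r + 1) [m + r choose r + 1]`, which in
turn comes from `[a + b] = p ^ b [a] + p' ^ a [b]`. Dividing by `[r + 1]` requires `[k] ≠ 0` for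
`k ≥ 1`, i.e. `(±q²) ^ k ≠ 1`, which holds because `q` is transcendental.
-/

open scoped Classical

noncomputable section

open Finset

section PQBinomial

variable {K : Type*} [Field K] (p q : K)

def pqInt (n : ℤ) : K := (p ^ n - q ^ n) / (p - q)

def pqFactorial (r : ℕ) : K := ∏ i ∈ range r, pqInt p q ((i : ℤ) + 1)

def pqChoose (n : ℤ) (r : ℕ) : K :=
  (∏ i ∈ range r, pqInt p q (n - (i : ℤ))) / pqFactorial p q r

variable {p q}

theorem pqInt_add (hp : p ≠ 0) (hq : q ≠ 0) (a b : ℤ) :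
    pqInt p q (a + b) = p ^ b * pqInt p q a + q ^ a * pqInt p q b := by
  simp only [pqInt, zpow_add₀ hp, zpow_add₀ hq]
  ring

theorem pqInt_natCast_add_one_ne_zero (hpq : ∀ k : ℕ, p ^ (k + 1) ≠ q ^ (k + 1)) (k : ℕ) :
    pqInt p q ((k : ℤ) + 1) ≠ 0 := by
  have hne : p ≠ q := by simpa using hpq 0
  refine div_ne_zero (sub_ne_zero.mpr ?_) (sub_ne_zero.mpr hne)
  exact_mod_cast hpq k

theorem pqChoose_succ (n : ℤ) (r : ℕ) :
    pqChoose p q n (r + 1) = pqChoose p q n r * pqInt p q (n - r) / pqInt p q ((r : ℤ) + 1) := by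
  simp only [pqChoose, pqFactorial, prod_range_succ]
  rw [div_mul_eq_mul_div, div_div]

theorem pqChoose_succ_succ (n : ℤ) (r : ℕ) :
    pqChoose p q (n + 1) (r + 1) =
      pqInt p q (n + 1) / pqInt p q ((r : ℤ) + 1) * pqChoose p q n r := by
  simp only [pqChoose, pqFactorial, prod_range_succ,
    prod_range_succ' (fun i => pqInt p q (n + 1 - i))]
  simp only [Nat.cast_add, Nat.cast_one, Nat.cast_zero, sub_zero, add_sub_add_right_eq_sub]
  ring

theorem pqChoose_pascal (hp : p ≠ 0) (hq : q ≠ 0)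
    (hpq : ∀ k : ℕ, p ^ (k + 1) ≠ q ^ (k + 1)) (m : ℤ) (r : ℕ) :
    pqChoose p q (m + r + 1) (r + 1) =
      p ^ m * pqChoose p q (m + r) r + q ^ (r + 1) * pqChoose p q (m + r) (r + 1) := by
  have hr := pqInt_natCast_add_one_ne_zero hpq r
  have hadd : pqInt p q (m + r + 1) =
      p ^ m * pqInt p q ((r : ℤ) + 1) + q ^ (r + 1) * pqInt p q m := by
    rw [show m + r + 1 = (r : ℤ) + 1 + m by ring, pqInt_add hp hq]
    norm_cast
  rw [pqChoose_succ_succ, pqChoose_succ, add_sub_cancel_right, hadd]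
  field_simp

theorem pqChoose_add_eq_sum (hp : p ≠ 0) (hq : q ≠ 0)
    (hpq : ∀ k : ℕ, p ^ (k + 1) ≠ q ^ (k + 1)) (m : ℤ) (r : ℕ) :
    pqChoose p q (m + r) r =
      ∑ s ∈ range (r + 1), p ^ (m * ((r : ℤ) - s)) * q ^ s * pqChoose p q (m + s - 1) s := by
  induction r with
  | zero => simp [pqChoose, pqFactorial]
  | succ r ih =>
    have hterm : ∀ s ∈ range (r + 1),
        p ^ (m * (((r + 1 : ℕ) : ℤ) - s)) * q ^ s * pqChoose p q (m + s - 1) s =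
          p ^ m * (p ^ (m * ((r : ℤ) - s)) * q ^ s * pqChoose p q (m + s - 1) s) := by
      intro s _
      rw [show m * (((r + 1 : ℕ) : ℤ) - s) = m + m * ((r : ℤ) - s) by push_cast; ring,
        zpow_add₀ hp]
      ring
    rw [sum_range_succ, sum_congr rfl hterm, ← mul_sum, ← ih, sub_self, mul_zero, zpow_zero,
      one_mul, Nat.cast_succ, ← add_assoc, add_sub_cancel_right, pqChoose_pascal hp hq hpq]

end PQBinomial

theorem zpow_mul_pqChoose_eq_sum {K : Type*} [Field K] {ε t : K} (hε : ε ≠ 0) (ht : t ≠ 0)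
    (hεt : ∀ k : ℕ, (ε * t) ^ (k + 1) ≠ t⁻¹ ^ (k + 1)) (n : ℤ) (r : ℕ) :
    t ^ ((n - r) * r) * pqChoose (ε * t) t⁻¹ n r =
      ∑ s ∈ range (r + 1),
        (ε * t ^ 2) ^ ((n - r) * ((r : ℤ) - s)) * t ^ ((n - r - 1) * s) *
          pqChoose (ε * t) t⁻¹ (n - r + s - 1) s := by
  have hsum := pqChoose_add_eq_sum (mul_ne_zero hε ht) (inv_ne_zero ht) hεt (n - r) r
  rw [sub_add_cancel] at hsum
  rw [hsum, mul_sum]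
  refine sum_congr rfl fun s _ => ?_
  have ht_pow :
      t ^ ((n - r) * r) * t ^ ((n - r) * ((r : ℤ) - s)) * t ^ (-(s : ℤ)) =
        (t ^ 2) ^ ((n - r) * ((r : ℤ) - s)) * t ^ ((n - r - 1) * s) := by
    rw [← zpow_natCast t 2, ← zpow_mul, ← zpow_add₀ ht, ← zpow_add₀ ht, ← zpow_add₀ ht]
    congr 1
    push_cast
    ring
  rw [mul_zpow, mul_zpow, inv_pow, ← zpow_natCast, ← zpow_neg]
  linear_combination
    (ε ^ ((n - r) * ((r : ℤ) - s)) * pqChoose (ε * t) t⁻¹ (n - r + s - 1) s) * ht_pow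

theorem mul_pow_ne_inv_pow {K : Type*} [Field K] {ε t : K} (hε : ε ^ 2 = 1) (ht : t ≠ 0)
    (ht_pow : ∀ j : ℕ, 0 < j → t ^ j ≠ 1) (k : ℕ) :
    (ε * t) ^ (k + 1) ≠ t⁻¹ ^ (k + 1) := by
  intro h
  refine ht_pow (4 * (k + 1)) (by omega) ?_
  calc t ^ (4 * (k + 1))
    _ = (ε ^ 2) ^ (k + 1) * t ^ (4 * (k + 1)) := by rw [hε, one_pow, one_mul]
    _ = ((ε * t) ^ (k + 1) * t ^ (k + 1)) ^ 2 := by ring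
    _ = 1 := by rw [h, ← mul_pow, inv_mul_cancel₀ ht, one_pow, one_pow]

theorem ratFunc_X_pow_ne_one {F : Type*} [Field F] (j : ℕ) (hj : 0 < j) :
    (RatFunc.X : RatFunc F) ^ j ≠ 1 :=
  fun h => RatFunc.transcendental_X.pow hj (h ▸ isAlgebraic_one)

theorem fst_qbinom (n : ℤ) (r : ℕ) :
    (qbinom n r).1 = pqChoose (piv.1 * qv.1) qv.1⁻¹ n r := by
  rw [qbinom, if_neg (by omega), Int.toNat_natCast]
  simp only [pqChoose, pqFactorial, qfact, qint, pqInt, Prod.fst_div, Prod.fst_prod,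
    Prod.fst_sub, Prod.fst_mul, Prod.pow_fst, zpow_neg_one, Prod.fst_inv, inv_zpow']

theorem snd_qbinom (n : ℤ) (r : ℕ) :
    (qbinom n r).2 = pqChoose (piv.2 * qv.2) qv.2⁻¹ n r := by
  rw [qbinom, if_neg (by omega), Int.toNat_natCast]
  simp only [pqChoose, pqFactorial, qfact, qint, pqInt, Prod.snd_div, Prod.snd_prod,
    Prod.snd_sub, Prod.snd_mul, Prod.pow_snd, zpow_neg_one, Prod.snd_inv, inv_zpow']

theorem statement6_general (n r : ℕ) :
    qv ^ (((n : ℤ) - (r : ℤ)) * (r : ℤ)) * qbinom (n : ℤ) (r : ℤ) =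
      ∑ s ∈ Finset.range (r + 1),
        (piv * qv ^ 2) ^ (((n : ℤ) - (r : ℤ)) * ((r : ℤ) - (s : ℤ))) *
          qv ^ (((n : ℤ) - (r : ℤ) - 1) * (s : ℤ)) *
          qbinom ((n : ℤ) - (r : ℤ) + (s : ℤ) - 1) (s : ℤ) := by
  have hX : (RatFunc.X : RatFunc ℚ) ≠ 0 := RatFunc.X_ne_zero
  have hX_pow := ratFunc_X_pow_ne_one (F := ℚ)
  refine Prod.ext ?_ ?_
  · simp only [Prod.fst_mul, Prod.fst_sum, Prod.pow_fst, fst_qbinom]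
    have hπ : piv.1 = 1 := rfl
    exact zpow_mul_pqChoose_eq_sum (by simp [hπ]) hX
      (mul_pow_ne_inv_pow (by simp [hπ]) hX hX_pow) n r
  · simp only [Prod.snd_mul, Prod.snd_sum, Prod.pow_snd, snd_qbinom]
    have hπ : piv.2 = -1 := rfl
    exact zpow_mul_pqChoose_eq_sum (by simp [hπ]) hX
      (mul_pow_ne_inv_pow (by simp [hπ]) hX hX_pow) n r

/-- For `0 ≤ r ≤ n`:
`q^{(n-r)r} [n choose r] = ∑_{s=0}^{r} (πq²)^{(n-r)(r-s)} q^{(n-r-1)s} [n-r+s-1 choose s]`. -/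
theorem statement6 (n r : ℕ) (hrn : r ≤ n) :
    qv ^ (((n : ℤ) - (r : ℤ)) * (r : ℤ)) * qbinom (n : ℤ) (r : ℤ) =
      ∑ s ∈ Finset.range (r + 1),
        (piv * qv ^ 2) ^ (((n : ℤ) - (r : ℤ)) * ((r : ℤ) - (s : ℤ))) *
          qv ^ (((n : ℤ) - (r : ℤ) - 1) * (s : ℤ)) *
          qbinom ((n : ℤ) - (r : ℤ) + (s : ℤ) - 1) (s : ℤ) :=
  statement6_general n r
end
end

section
/- Define b_{m,n}(r) := (πq^{-2})^{(n-r)#r} · Σ_{s=0}^{r-1} (πq²)^{n-r+m(r-s-1)} · q^{(m-n+r-1)(n-r+s+1)+(n-r)s} · [m+s choose n-r+s+1]_{q,π} · [n-r+s choose s]_{q,π} and c_{m,n}(r) := (πq^{-2})^{(n-r)#r} · q^{(m-n+r)n+(n-r)r} · [m+r choose n]_{q,π} · [n choose r]_{q,π}, where a#r := a + (a+1) + ⋯ + (a+r-1) = ar + binom(r,2). Then c_{m,n}(r) = b_{m,n}(r) + b_{m,n}(r+1) for all m, n ∈ ℤ and r ≥ 0. -/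
open scoped Classical

noncomputable section

/-- `b_{m,n}(r)`, where `(n-r)#r = (n-r)r + binom(r,2)`. -/
def bCoeff (m n : ℤ) (r : ℕ) : Rqpi :=
  (piv * qv ^ (-2 : ℤ)) ^ ((n - (r : ℤ)) * (r : ℤ) + (r.choose 2 : ℤ)) *
    ∑ s ∈ Finset.range r,
      (piv * qv ^ 2) ^ (n - (r : ℤ) + m * ((r : ℤ) - (s : ℤ) - 1)) *
        qv ^ ((m - n + (r : ℤ) - 1) * (n - (r : ℤ) + (s : ℤ) + 1) +
          (n - (r : ℤ)) * (s : ℤ)) *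
        (qbinom (m + (s : ℤ)) (n - (r : ℤ) + (s : ℤ) + 1) *
          qbinom (n - (r : ℤ) + (s : ℤ)) (s : ℤ))

/-- `c_{m,n}(r)`. -/
def cCoeff (m n : ℤ) (r : ℕ) : Rqpi :=
  (piv * qv ^ (-2 : ℤ)) ^ ((n - (r : ℤ)) * (r : ℤ) + (r.choose 2 : ℤ)) *
    (qv ^ ((m - n + (r : ℤ)) * n + (n - (r : ℤ)) * (r : ℤ)) *
      (qbinom (m + (r : ℤ)) n * qbinom n (r : ℤ)))


/-!
Both coefficients carry the prefactor `(πq⁻²)^((n-r)#r)`, and since `π² = 1` we have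
`πq⁻² = (πq²)⁻¹`, so `b(r+1)` carries the same prefactor times `(πq²)^(-(n-r-1))`. After
removing it, the identity is a Wilf–Zeilberger telescoping sum: with `d = n - r`, the summands
`T s` of `b(r)` and `U s` of `b(r+1)` satisfy `T s + U s = G (s+1) - G s` for the certificate
`G s = (πq)^(d+m(r-s)) q^(-d²+md+mr) [m+s choose d+s] [d+s-1 choose s-1]`
(two applications of the `(q,π)`-Pascal rule), `G 0 = 0`, and `G r + U r` is `c(r)` without its
prefactor (one more Pascal step). This works in any field where `π² = 1` and `πq²` is not a
root of unity, hence in both components of `ℚ(q)^π ≅ ℚ(q) × ℚ(q)`, where `π = ±1`.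
-/

section QPiBinomial

variable {K : Type*} [Field K] (e q : K)

def qpiInt (z : ℤ) : K := ((e * q) ^ z - q ^ (-z)) / (e * q - q ^ (-1 : ℤ))

def qpiFact (n : ℕ) : K := ∏ i ∈ Finset.range n, qpiInt e q ((i : ℤ) + 1)

def qpiBinom (n r : ℤ) : K :=
  if r < 0 then 0
  else (∏ i ∈ Finset.range r.toNat, qpiInt e q (n - (i : ℤ))) / qpiFact e q r.toNat

variable {e q}

theorem qpiInt_add (hp : e * q ≠ 0) (hq : q ≠ 0) (x y : ℤ) :
    qpiInt e q (x + y) = q ^ (-y) * qpiInt e q x + (e * q) ^ x * qpiInt e q y := by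
  simp only [qpiInt, ← mul_div_assoc, ← add_div]
  rw [zpow_add₀ hp, neg_add, zpow_add₀ hq]
  ring

theorem qpiInt_natCast_ne_zero (hq : q ≠ 0) (hroot : ¬IsOfFinOrder (e * q ^ 2)) {k : ℕ}
    (hk : 0 < k) : qpiInt e q k ≠ 0 := by
  have numerator_ne_zero : ∀ k : ℕ, 0 < k → (e * q) ^ (k : ℤ) - q ^ (-(k : ℤ)) ≠ 0 := by
    intro k hk h
    refine hroot (isOfFinOrder_iff_pow_eq_one.2 ⟨k, hk, ?_⟩)
    calc (e * q ^ 2) ^ k = (e * q) ^ (k : ℤ) * q ^ (k : ℤ) := by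
          rw [zpow_natCast, zpow_natCast]; ring
      _ = 1 := by rw [sub_eq_zero.1 h, zpow_neg, inv_mul_cancel₀ (zpow_ne_zero _ hq)]
  exact div_ne_zero (numerator_ne_zero k hk) (by simpa using numerator_ne_zero 1 one_pos)

theorem qpiFact_ne_zero (hq : q ≠ 0) (hroot : ¬IsOfFinOrder (e * q ^ 2)) (n : ℕ) :
    qpiFact e q n ≠ 0 :=
  Finset.prod_ne_zero_iff.2 fun i _ => by
    exact_mod_cast qpiInt_natCast_ne_zero hq hroot i.succ_pos

theorem qpiBinom_natCast (n : ℤ) (r : ℕ) :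
    qpiBinom e q n r = (∏ i ∈ Finset.range r, qpiInt e q (n - (i : ℤ))) / qpiFact e q r := by
  simp [qpiBinom]

theorem qpiBinom_of_neg (n : ℤ) {r : ℤ} (hr : r < 0) : qpiBinom e q n r = 0 := if_pos hr

theorem qpiBinom_zero (n : ℤ) : qpiBinom e q n 0 = 1 := by
  simp [qpiBinom, qpiFact]

theorem qpiBinom_pascal (hp : e * q ≠ 0) (hq : q ≠ 0) (hroot : ¬IsOfFinOrder (e * q ^ 2))
    (a b : ℤ) :
    qpiBinom e q a b = q ^ (-b) * qpiBinom e q (a - 1) b +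
      (e * q) ^ (a - b) * qpiBinom e q (a - 1) (b - 1) := by
  rcases lt_trichotomy b 0 with hb | rfl | hb
  · simp [qpiBinom_of_neg _ hb, qpiBinom_of_neg _ (by omega : b - 1 < 0)]
  · simp [qpiBinom_zero, qpiBinom_of_neg _ (show (-1 : ℤ) < 0 by norm_num)]
  obtain ⟨t, rfl⟩ : ∃ t : ℕ, b = t + 1 := ⟨(b - 1).toNat, by omega⟩
  have hsplit := qpiInt_add hp hq (a - 1 - t) (t + 1)
  rw [show a - 1 - t + (t + 1) = a by ring] at hsplit
  have hfact : qpiFact e q (t + 1) = qpiFact e q t * qpiInt e q (t + 1) :=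
    Finset.prod_range_succ _ t
  rw [add_sub_cancel_right, ← Nat.cast_add_one, qpiBinom_natCast, qpiBinom_natCast,
    qpiBinom_natCast, Finset.prod_range_succ', Finset.prod_range_succ, hfact]
  simp only [Nat.cast_add, Nat.cast_one, Nat.cast_zero, sub_zero, hsplit]
  have hF := qpiFact_ne_zero hq hroot t
  have hI : qpiInt e q (t + 1) ≠ 0 := by
    exact_mod_cast qpiInt_natCast_ne_zero hq hroot t.succ_pos
  have hprod : ∏ i ∈ Finset.range t, qpiInt e q (a - (i + 1)) =
      ∏ i ∈ Finset.range t, qpiInt e q (a - 1 - i) :=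
    Finset.prod_congr rfl fun i _ => by rw [sub_sub, add_comm (i : ℤ)]
  field_simp
  rw [hprod, show a - 1 - (t : ℤ) = a - (t + 1) by ring]
  ring

end QPiBinomial

section WZ
variable {K : Type*} [Field K] (e q : K)

def bTerm (m d r : ℤ) (s : ℕ) : K :=
  (e * q) ^ (d + m * (r - s - 1)) * q ^ (-d ^ 2 + m * d + m * r - (d + s + 1)) *
    (qpiBinom e q (m + s) (d + s + 1) * qpiBinom e q (d + s) s)

def bSuccTerm (m d r : ℤ) (s : ℕ) : K :=
  (e * q) ^ (m * (r - s)) * q ^ (-d ^ 2 + m * d + m * r - s) *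
    (qpiBinom e q (m + s) (d + s) * qpiBinom e q (d + s - 1) s)

def wzCert (m d r : ℤ) (s : ℕ) : K :=
  (e * q) ^ (d + m * (r - s)) * q ^ (-d ^ 2 + m * d + m * r) *
    (qpiBinom e q (m + s) (d + s) * qpiBinom e q (d + s - 1) (s - 1))

variable {e q}

theorem wzCert_zero (m d r : ℤ) : wzCert e q m d r 0 = 0 := by
  simp [wzCert, qpiBinom_of_neg _ (show (-1 : ℤ) < 0 by norm_num)]

theorem wzCert_succ_sub (hp : e * q ≠ 0) (hq : q ≠ 0) (hroot : ¬IsOfFinOrder (e * q ^ 2))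
    (m d r : ℤ) (s : ℕ) :
    wzCert e q m d r (s + 1) - wzCert e q m d r s =
      bTerm e q m d r s + bSuccTerm e q m d r s := by
  -- Pascal's rule on both factors of `wzCert (s + 1)` leaves three terms, which are `bTerm s`,
  -- `bSuccTerm s` and `wzCert s` once their monomials are merged (`hT`, `hU`, `hG`).
  have h1 := qpiBinom_pascal hp hq hroot (m + s + 1) (d + s + 1)
  have h2 := qpiBinom_pascal hp hq hroot (d + s) s
  have hT : (e * q) ^ (d + m * (r - s - 1)) * q ^ (-d ^ 2 + m * d + m * r) *
      q ^ (-(d + s + 1)) =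
      (e * q) ^ (d + m * (r - s - 1)) * q ^ (-d ^ 2 + m * d + m * r - (d + s + 1)) := by
    rw [mul_assoc, ← zpow_add₀ hq]; ring_nf
  have hU : (e * q) ^ (d + m * (r - s - 1)) * q ^ (-d ^ 2 + m * d + m * r) *
      (e * q) ^ (m + s + 1 - (d + s + 1)) * q ^ (-(s : ℤ)) =
      (e * q) ^ (m * (r - s)) * q ^ (-d ^ 2 + m * d + m * r - s) := by
    rw [mul_right_comm _ (q ^ _), ← zpow_add₀ hp, mul_assoc, ← zpow_add₀ hq]; ring_nf
  have hG : (e * q) ^ (d + m * (r - s - 1)) * q ^ (-d ^ 2 + m * d + m * r) *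
      (e * q) ^ (m + s + 1 - (d + s + 1)) * (e * q) ^ (d + s - s) =
      (e * q) ^ (d + m * (r - s)) * q ^ (-d ^ 2 + m * d + m * r) := by
    rw [mul_right_comm _ (q ^ _), ← zpow_add₀ hp, mul_right_comm _ (q ^ _), ← zpow_add₀ hp]
    ring_nf
  simp only [wzCert, bTerm, bSuccTerm]
  push_cast
  linear_combination (norm := ring_nf)
    (e * q) ^ (d + m * (r - s - 1)) * q ^ (-d ^ 2 + m * d + m * r) *
      qpiBinom e q (d + s) s * h1 +
    (e * q) ^ (d + m * (r - s - 1)) * q ^ (-d ^ 2 + m * d + m * r) *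
      (e * q) ^ (m + s + 1 - (d + s + 1)) * qpiBinom e q (m + s) (d + s) * h2 +
    qpiBinom e q (m + s) (d + s + 1) * qpiBinom e q (d + s) s * hT +
    qpiBinom e q (m + s) (d + s) * qpiBinom e q (d + s - 1) s * hU +
    qpiBinom e q (m + s) (d + s) * qpiBinom e q (d + s - 1) (s - 1) * hG

theorem wzCert_add_bSuccTerm (hp : e * q ≠ 0) (hq : q ≠ 0) (hroot : ¬IsOfFinOrder (e * q ^ 2))
    (m n : ℤ) (r : ℕ) :
    wzCert e q m (n - r) r r + bSuccTerm e q m (n - r) r r =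
      q ^ ((m - n + r) * n + (n - r) * r) * (qpiBinom e q (m + r) n * qpiBinom e q n r) := by
  have h := qpiBinom_pascal hp hq hroot n r
  have f : q ^ ((m - n + r) * n + (n - r) * r) * q ^ (-(r : ℤ)) =
      q ^ (-(n - r) ^ 2 + m * (n - r) + m * r - r) := by rw [← zpow_add₀ hq]; ring_nf
  simp only [wzCert, bSuccTerm, sub_self, mul_zero, zpow_zero, one_mul]
  linear_combination (norm := ring_nf)
    -(q ^ ((m - n + r) * n + (n - r) * r) * qpiBinom e q (m + r) n * h)
      - qpiBinom e q (m + r) n * qpiBinom e q (n - 1) r * f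

end WZ

section Coefficients
variable {K : Type*} [Field K] (e q : K)

def qpiBCoeff (m n : ℤ) (r : ℕ) : K :=
  (e * q ^ (-2 : ℤ)) ^ ((n - (r : ℤ)) * (r : ℤ) + (r.choose 2 : ℤ)) *
    ∑ s ∈ Finset.range r,
      (e * q ^ 2) ^ (n - (r : ℤ) + m * ((r : ℤ) - (s : ℤ) - 1)) *
        q ^ ((m - n + (r : ℤ) - 1) * (n - (r : ℤ) + (s : ℤ) + 1) +
          (n - (r : ℤ)) * (s : ℤ)) *
        (qpiBinom e q (m + (s : ℤ)) (n - (r : ℤ) + (s : ℤ) + 1) *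
          qpiBinom e q (n - (r : ℤ) + (s : ℤ)) (s : ℤ))

def qpiCCoeff (m n : ℤ) (r : ℕ) : K :=
  (e * q ^ (-2 : ℤ)) ^ ((n - (r : ℤ)) * (r : ℤ) + (r.choose 2 : ℤ)) *
    (q ^ ((m - n + (r : ℤ)) * n + (n - (r : ℤ)) * (r : ℤ)) *
      (qpiBinom e q (m + (r : ℤ)) n * qpiBinom e q n (r : ℤ)))

variable {e q}

theorem mul_sq_zpow_mul_zpow (hq : q ≠ 0) (x y : ℤ) :
    (e * q ^ 2) ^ x * q ^ y = (e * q) ^ x * q ^ (x + y) := by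
  rw [sq, ← mul_assoc, mul_zpow, mul_assoc, ← zpow_add₀ hq]

theorem qpiBCoeff_eq_sum_bTerm (hq : q ≠ 0) (m n : ℤ) (r : ℕ) :
    qpiBCoeff e q m n r = (e * q ^ (-2 : ℤ)) ^ ((n - r) * r + (r.choose 2 : ℤ)) *
      ∑ s ∈ Finset.range r, bTerm e q m (n - r) r s := by
  unfold qpiBCoeff
  congr 1
  refine Finset.sum_congr rfl fun s _ => ?_
  rw [mul_sq_zpow_mul_zpow hq, bTerm]
  ring_nf

theorem qpiBCoeff_succ_eq_sum_bSuccTerm (he : e * e = 1) (hq : q ≠ 0) (m n : ℤ) (r : ℕ) :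
    qpiBCoeff e q m n (r + 1) = (e * q ^ (-2 : ℤ)) ^ ((n - r) * r + (r.choose 2 : ℤ)) *
      ∑ s ∈ Finset.range (r + 1), bSuccTerm e q m (n - r) r s := by
  have hinv : e * q ^ (-2 : ℤ) = (e * q ^ 2)⁻¹ := by
    refine eq_inv_of_mul_eq_one_left ?_
    rw [mul_mul_mul_comm, he, ← zpow_natCast, ← zpow_add₀ hq]
    norm_num
  have hw : e * q ^ 2 ≠ 0 := mul_ne_zero (left_ne_zero_of_mul_eq_one he) (pow_ne_zero 2 hq)
  have hexp : (n - (r + 1 : ℕ)) * (r + 1 : ℕ) + ((r + 1).choose 2 : ℕ) =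
      (n - r) * r + (r.choose 2 : ℤ) + (n - r - 1) := by
    simp only [Nat.choose_succ_succ r 1, Nat.choose_one_right]
    push_cast
    ring
  rw [qpiBCoeff, hexp, hinv, zpow_add₀ (inv_ne_zero hw), mul_assoc, Finset.mul_sum]
  congr 1
  refine Finset.sum_congr rfl fun s _ => ?_
  simp only [inv_zpow', ← mul_assoc]
  rw [← zpow_add₀ hw, mul_sq_zpow_mul_zpow hq, bSuccTerm]
  push_cast
  ring_nf

theorem qpiCCoeff_eq_qpiBCoeff_add (he : e * e = 1) (hq : q ≠ 0)
    (hroot : ¬IsOfFinOrder (e * q ^ 2)) (m n : ℤ) (r : ℕ) :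
    qpiCCoeff e q m n r = qpiBCoeff e q m n r + qpiBCoeff e q m n (r + 1) := by
  have hp : e * q ≠ 0 := mul_ne_zero (left_ne_zero_of_mul_eq_one he) hq
  have htelescope :
      ∑ s ∈ Finset.range r, (bTerm e q m (n - r) r s + bSuccTerm e q m (n - r) r s) =
        wzCert e q m (n - r) r r := by
    rw [← Finset.sum_congr rfl fun s _ => wzCert_succ_sub hp hq hroot m (n - r) r s,
      Finset.sum_range_sub, wzCert_zero, sub_zero]
  rw [qpiCCoeff, ← wzCert_add_bSuccTerm hp hq hroot, qpiBCoeff_eq_sum_bTerm hq,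
    qpiBCoeff_succ_eq_sum_bSuccTerm he hq, Finset.sum_range_succ, ← htelescope,
    Finset.sum_add_distrib]
  ring

end Coefficients

theorem isOfFinOrder_of_isOfFinOrder_mul_sq {M : Type*} [CommMonoid M] {e x : M}
    (he : e * e = 1) (h : IsOfFinOrder (e * x ^ 2)) : IsOfFinOrder x := by
  have hsq := (isOfFinOrder_iff_pow_eq_one.2 ⟨2, two_pos, by rw [sq, he]⟩).mul h
  rw [← mul_assoc, he, one_mul] at hsq
  exact hsq.of_pow two_ne_zero

theorem RatFunc.not_isOfFinOrder_X {K : Type*} [Field K] : ¬IsOfFinOrder (X : RatFunc K) := by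
  intro h
  obtain ⟨N, hN, hpow⟩ := isOfFinOrder_iff_pow_eq_one.1 h
  exact RatFunc.transcendental_X.pow hN (hpow ▸ isAlgebraic_one)

section Components

open RatFunc

theorem qint_eq_qpiInt (z : ℤ) : qint z = (qpiInt 1 X z, qpiInt (-1) X z) := by
  ext <;> simp only [qint, qpiInt, qv, piv, Prod.fst_div, Prod.fst_sub, Prod.fst_mul, Prod.pow_fst,
    Prod.snd_div, Prod.snd_sub, Prod.snd_mul, Prod.pow_snd]

theorem qfact_eq_qpiFact (n : ℕ) : qfact n = (qpiFact 1 X n, qpiFact (-1) X n) := by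
  ext <;> simp only [qfact, qpiFact, qint_eq_qpiInt, Prod.fst_prod, Prod.snd_prod]

theorem qbinom_eq_qpiBinom (a b : ℤ) : qbinom a b = (qpiBinom 1 X a b, qpiBinom (-1) X a b) := by
  unfold qbinom qpiBinom
  split_ifs
  · rfl
  · ext <;> simp only [qint_eq_qpiInt, qfact_eq_qpiFact, Prod.fst_div, Prod.fst_prod,
      Prod.snd_div, Prod.snd_prod]

theorem bCoeff_eq_qpiBCoeff (m n : ℤ) (r : ℕ) :
    bCoeff m n r = (qpiBCoeff 1 X m n r, qpiBCoeff (-1) X m n r) := by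
  ext <;> simp only [bCoeff, qpiBCoeff, qbinom_eq_qpiBinom, qv, piv, Prod.fst_mul, Prod.pow_fst,
    Prod.fst_sum, Prod.snd_mul, Prod.pow_snd, Prod.snd_sum]

theorem cCoeff_eq_qpiCCoeff (m n : ℤ) (r : ℕ) :
    cCoeff m n r = (qpiCCoeff 1 X m n r, qpiCCoeff (-1) X m n r) := by
  ext <;> simp only [cCoeff, qpiCCoeff, qbinom_eq_qpiBinom, qv, piv, Prod.fst_mul, Prod.pow_fst,
    Prod.snd_mul, Prod.pow_snd]

end Components

/-- `c_{m,n}(r) = b_{m,n}(r) + b_{m,n}(r+1)` for all `m, n ∈ ℤ` and `r ≥ 0`. -/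
theorem statement7 (m n : ℤ) (r : ℕ) : cCoeff m n r = bCoeff m n r + bCoeff m n (r + 1) := by
  have key (e : RatFunc ℚ) (he : e * e = 1) :=
    qpiCCoeff_eq_qpiBCoeff_add he RatFunc.X_ne_zero
      (fun h => RatFunc.not_isOfFinOrder_X (isOfFinOrder_of_isOfFinOrder_mul_sq he h)) m n r
  rw [cCoeff_eq_qpiCCoeff, bCoeff_eq_qpiBCoeff, bCoeff_eq_qpiBCoeff, Prod.mk_add_mk,
    key 1 (mul_one 1), key (-1) (by norm_num)]
end
end

section
/- In the algebra OSym of odd symmetric functions, for r < s the straightening rule holds: h_r h_s = h_s h_r if r ≡ s mod 2; h_r h_s = h_s h_r + 2·Σ_{t=1}^{r} (-1)^{binom(t,2)} h_{s+t} h_{r-t} if r is even and s is odd; and h_r h_s = -h_s h_r - 2·Σ_{t=1}^{r} (-1)^{binom(t+1,2)} h_{s+t} h_{r-t} if r is odd and s is even. -/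
/-!
Induction on `r`. The defining relation for the pair `(s, r + 1)` expresses `h_{r+1} h_s`
through `h_{s+1} h_r` and `h_r h_{s+1}`, and the induction hypothesis for `(r, s + 1)`
(of the opposite parity pattern) straightens the latter. Peeling off the term `t = 1` of the
sum for `r + 1` leaves the sum for `(r, s + 1)` with the sign exponent shifted from
`binom(t, 2)` to `binom(t + 1, 2)` or from `binom(t + 1, 2)` to `binom(t + 2, 2)`,
and the second shift is a global sign change.
-/

/-- The defining relations of the algebra `OSym` of odd symmetric functions over a
field of characteristic `≠ 2`, in terms of the odd complete symmetric functions
`h_r` (`r ≥ 1`, with `h_0 = 1`). -/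
def OSymHRels {A : Type*} [Ring A] (h : ℕ → A) : Prop :=
  h 0 = 1 ∧
    (∀ r s : ℕ, 1 ≤ s → r % 2 = s % 2 → h r * h s = h s * h r) ∧
      ∀ r s : ℕ, 1 ≤ s → r % 2 ≠ s % 2 →
        h r * h s + (-1 : A) ^ r * (h s * h r) =
          (-1 : A) ^ r * (h (r + 1) * h (s - 1)) + h (s - 1) * h (r + 1)

open Finset

theorem Finset.sum_Icc_one_succ {M : Type*} [AddCommMonoid M] (f : ℕ → M) (n : ℕ) :
    ∑ t ∈ Icc 1 (n + 1), f t = f 1 + ∑ t ∈ Icc 1 n, f (t + 1) := by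
  induction n with
  | zero => simp
  | succ n ih => rw [sum_Icc_succ_top (by omega), ih, sum_Icc_succ_top (by omega), add_assoc]

theorem neg_one_pow_choose_two_add_two {R : Type*} [Monoid R] [HasDistribNeg R] (n : ℕ) :
    (-1 : R) ^ (n + 2).choose 2 = -(-1 : R) ^ n.choose 2 := by
  have hchoose : (n + 2).choose 2 = n.choose 2 + (2 * n + 1) := by
    simp only [Nat.choose_succ_succ, Nat.choose_one_right, Nat.choose_zero_right]; ring
  rw [hchoose, pow_add, Odd.neg_one_pow ⟨n, rfl⟩, mul_neg_one]

section Straightening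

variable {A : Type*} [Ring A]

/-- The rule uses `c = 0` for `r` even and `c = 1` for `r` odd. -/
def straighteningSum (h : ℕ → A) (c r s : ℕ) : A :=
  ∑ t ∈ Icc 1 r, (-1 : A) ^ (t + c).choose 2 * (h (s + t) * h (r - t))

theorem straighteningSum_zero (h : ℕ → A) (c s : ℕ) : straighteningSum h c 0 s = 0 := by
  simp [straighteningSum]

theorem straighteningSum_succ (h : ℕ → A) (c r s : ℕ) :
    straighteningSum h c (r + 1) s =
      (-1 : A) ^ (c + 1).choose 2 * (h (s + 1) * h r) + straighteningSum h (c + 1) r (s + 1) := by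
  unfold straighteningSum
  rw [sum_Icc_one_succ, Nat.add_sub_cancel, add_comm 1 c]
  congr 1
  refine sum_congr rfl fun t _ => ?_
  rw [add_right_comm t 1 c, add_right_comm s 1 t, Nat.add_sub_add_right, add_assoc t c 1,
    add_assoc s t 1]

theorem straighteningSum_add_two (h : ℕ → A) (c r s : ℕ) :
    straighteningSum h (c + 2) r s = -straighteningSum h c r s := by
  unfold straighteningSum
  rw [← sum_neg_distrib]
  refine sum_congr rfl fun t _ => ?_
  rw [← add_assoc, neg_one_pow_choose_two_add_two, neg_mul]

namespace OSymHRels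

variable {h : ℕ → A}

theorem succ_mul (hrels : OSymHRels h) {r s : ℕ} (hpar : s % 2 ≠ (r + 1) % 2) :
    h (r + 1) * h s = h (s + 1) * h r + (-1 : A) ^ s * (h r * h (s + 1) - h s * h (r + 1)) := by
  have rel := hrels.2.2 s (r + 1) (by omega) hpar
  rw [Nat.add_sub_cancel] at rel
  rw [← sub_eq_zero] at rel ⊢
  rcases Nat.even_or_odd s with hs | hs
  · rw [hs.neg_one_pow] at rel ⊢
    convert rel using 1
    noncomm_ring
  · rw [hs.neg_one_pow] at rel ⊢
    convert neg_eq_zero.mpr rel using 1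
    noncomm_ring

theorem straighten (hrels : OSymHRels h) (r : ℕ) :
    (∀ s, r < s → r % 2 = 0 → s % 2 = 1 →
      h r * h s = h s * h r + 2 * straighteningSum h 0 r s) ∧
    (∀ s, r < s → r % 2 = 1 → s % 2 = 0 →
      h r * h s = -(h s * h r) - 2 * straighteningSum h 1 r s) := by
  induction r with
  | zero => exact ⟨fun s _ _ _ => by simp [hrels.1, straighteningSum_zero], by omega⟩
  | succ r ih =>
    constructor
    · intro s hrs hr hs
      rw [hrels.succ_mul (by omega), Odd.neg_one_pow (Nat.odd_iff.mpr hs),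
        ih.2 (s + 1) (by omega) (by omega) (by omega), straighteningSum_succ]
      simp only [zero_add, Nat.choose_eq_zero_of_lt one_lt_two, pow_zero, one_mul]
      noncomm_ring
    · intro s hrs hr hs
      rw [hrels.succ_mul (by omega), Even.neg_one_pow (Nat.even_iff.mpr hs),
        ih.1 (s + 1) (by omega) (by omega) (by omega), straighteningSum_succ,
        straighteningSum_add_two]
      simp only [Nat.reduceAdd, Nat.choose_self, pow_one, neg_one_mul]
      noncomm_ring

end OSymHRels

end Straightening

theorem statement9_general {A : Type*} [Ring A]
    (h : ℕ → A) (hrels : OSymHRels h) (r s : ℕ) (hrs : r < s) :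
    (r % 2 = s % 2 → h r * h s = h s * h r) ∧
      (r % 2 = 0 → s % 2 = 1 →
        h r * h s =
          h s * h r +
            2 * ∑ t ∈ Finset.Icc 1 r, (-1 : A) ^ t.choose 2 * (h (s + t) * h (r - t))) ∧
      (r % 2 = 1 → s % 2 = 0 →
        h r * h s =
          -(h s * h r) -
            2 * ∑ t ∈ Finset.Icc 1 r,
              (-1 : A) ^ (t + 1).choose 2 * (h (s + t) * h (r - t))) := by
  obtain ⟨even_odd, odd_even⟩ := hrels.straighten r
  exact ⟨hrels.2.1 r s (by omega), even_odd s hrs, odd_even s hrs⟩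

/-- The straightening rule in `OSym`, for `r < s`:  `h_r h_s = h_s h_r` if `r ≡ s mod 2`;
`h_r h_s = h_s h_r + 2 ∑_{t=1}^r (-1)^{binom(t,2)} h_{s+t} h_{r-t}` if `r` even, `s` odd;
`h_r h_s = -h_s h_r - 2 ∑_{t=1}^r (-1)^{binom(t+1,2)} h_{s+t} h_{r-t}` if `r` odd, `s` even. -/
theorem statement9 {k A : Type*} [Field k] [Ring A] [Algebra k A] (h2 : (2 : k) ≠ 0)
    (h : ℕ → A) (hrels : OSymHRels h) (r s : ℕ) (hrs : r < s) :
    (r % 2 = s % 2 → h r * h s = h s * h r) ∧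
      (r % 2 = 0 → s % 2 = 1 →
        h r * h s =
          h s * h r +
            2 * ∑ t ∈ Finset.Icc 1 r, (-1 : A) ^ t.choose 2 * (h (s + t) * h (r - t))) ∧
      (r % 2 = 1 → s % 2 = 0 →
        h r * h s =
          -(h s * h r) -
            2 * ∑ t ∈ Finset.Icc 1 r,
              (-1 : A) ^ (t + 1).choose 2 * (h (s + t) * h (r - t))) :=
  statement9_general h hrels r s hrs
end

section
/- The free superalgebra on generators o (odd, degree 2) and e_{2r} for r ≥ 1 (even, degree 4r) subject only to the relations [e_{2r}, e_{2s}] = 0, [o², e_{2r}] = 0, and [o, e_{2r+2}] = [½(o e_{2r} + e_{2r} o), e₂] is isomorphic to OSym, via o ↦ e₁ and e_{2r} ↦ e_{2r}; in particular in OSym one has e_{2r+1} = ½(o e_{2r} + e_{2r} o), and the relations [e_{2r-1}, e_{2s}] = [e_{2s-1}, e_{2r}] and e_{2r}e_{2s+1} + e_{2s+1}e_{2r} = e_{2s}e_{2r+1} + e_{2r+1}e_{2s} hold. -/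
noncomputable section

/-- Relations presenting the algebra `OSym` of odd symmetric functions in terms of the
odd elementary symmetric functions: the generator `r : ℕ` stands for `e_r`, with `e_0`
identified with `1` by a relation.  The relations are `e_r e_s = e_s e_r` if
`r ≡ s (mod 2)` and `e_r e_s + (-1)^r e_s e_r = (-1)^r e_{r+1} e_{s-1} + e_{s-1} e_{r+1}`
if `r ≢ s (mod 2)` (for `r ≥ 0`, `s ≥ 1`). -/
inductive OSymRel (k : Type*) [Field k] : FreeAlgebra k ℕ → FreeAlgebra k ℕ → Prop
  | unit : OSymRel k (FreeAlgebra.ι k 0) 1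
  | comm (r s : ℕ) (hs : 1 ≤ s) (hpar : r % 2 = s % 2) :
      OSymRel k (FreeAlgebra.ι k r * FreeAlgebra.ι k s)
        (FreeAlgebra.ι k s * FreeAlgebra.ι k r)
  | skew (r s : ℕ) (hs : 1 ≤ s) (hpar : r % 2 ≠ s % 2) :
      OSymRel k
        (FreeAlgebra.ι k r * FreeAlgebra.ι k s +
          (-1 : FreeAlgebra k ℕ) ^ r * (FreeAlgebra.ι k s * FreeAlgebra.ι k r))
        ((-1 : FreeAlgebra k ℕ) ^ r * (FreeAlgebra.ι k (r + 1) * FreeAlgebra.ι k (s - 1)) +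
          FreeAlgebra.ι k (s - 1) * FreeAlgebra.ι k (r + 1))

/-- The algebra `OSym` of odd symmetric functions. -/
abbrev OSym (k : Type*) [Field k] := RingQuot (OSymRel k)

/-- The odd elementary symmetric function `e_r ∈ OSym`. -/
def esym (k : Type*) [Field k] (r : ℕ) : OSym k :=
  RingQuot.mkAlgHom k (OSymRel k) (FreeAlgebra.ι k r)

/-- Relations of the presentation from the statement: generator `0` is `o` (odd, degree 2)
and generator `r ≥ 1` is `e_{2r}` (even, degree `4r`).  The relations are
`[e_{2r}, e_{2s}] = 0`, `[o², e_{2r}] = 0` and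
`[o, e_{2r+2}] = [½(o e_{2r} + e_{2r} o), e₂]` for `r, s ≥ 1`. -/
inductive ToryRel (k : Type*) [Field k] : FreeAlgebra k ℕ → FreeAlgebra k ℕ → Prop
  | comm (r s : ℕ) (hr : 1 ≤ r) (hs : 1 ≤ s) :
      ToryRel k (FreeAlgebra.ι k r * FreeAlgebra.ι k s)
        (FreeAlgebra.ι k s * FreeAlgebra.ι k r)
  | osq (r : ℕ) (hr : 1 ≤ r) :
      ToryRel k (FreeAlgebra.ι k 0 * FreeAlgebra.ι k 0 * FreeAlgebra.ι k r)
        (FreeAlgebra.ι k r * (FreeAlgebra.ι k 0 * FreeAlgebra.ι k 0))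
  | third (r : ℕ) (hr : 1 ≤ r) :
      ToryRel k
        (FreeAlgebra.ι k 0 * FreeAlgebra.ι k (r + 1) -
          FreeAlgebra.ι k (r + 1) * FreeAlgebra.ι k 0)
        ((2 : k)⁻¹ • (FreeAlgebra.ι k 0 * FreeAlgebra.ι k r +
              FreeAlgebra.ι k r * FreeAlgebra.ι k 0) * FreeAlgebra.ι k 1 -
          FreeAlgebra.ι k 1 *
            ((2 : k)⁻¹ • (FreeAlgebra.ι k 0 * FreeAlgebra.ι k r +
              FreeAlgebra.ι k r * FreeAlgebra.ι k 0)))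

namespace Stmt10Aux

section Abstract

variable {k : Type*} [Field k] {R : Type*} [Ring R] [Algebra k R]

lemma smul_cancel₂ {M : Type*} [AddCommMonoid M] [Module k M] (h2 : (2:k) ≠ 0)
    {x y : M} (h : (2:k) • x = (2:k) • y) : x = y := by
  have := congrArg (fun z => (2:k)⁻¹ • z) h
  simpa [smul_smul, inv_mul_cancel₀ h2] using this

/-- The commutator `[o, a m]`. -/
def Cmt (o : R) (a : ℕ → R) (m : ℕ) : R := o * a m - a m * o

variable (o : R) (a : ℕ → R)

lemma ab_anti (ht2 : ∀ m, o * o * a m = a m * (o * o)) (m : ℕ) :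
    o * Cmt o a m + Cmt o a m * o = 0 := by
  have key : o * Cmt o a m + Cmt o a m * o = o*o*a m - a m*(o*o) := by
    unfold Cmt; noncomm_ring
  rw [key, ht2, sub_self]

lemma ab_c0 (ha0 : a 0 = 1) : Cmt o a 0 = 0 := by
  unfold Cmt; rw [ha0, mul_one, one_mul, sub_self]

lemma ab_t3u (h2 : (2:k) ≠ 0)
    (ht3 : ∀ m, 1 ≤ m → o * a (m+1) - a (m+1) * o
      = (2:k)⁻¹ • (o * a m + a m * o) * a 1 - a 1 * ((2:k)⁻¹ • (o * a m + a m * o)))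
    (m : ℕ) (hm : 1 ≤ m) :
    (2:k) • Cmt o a (m+1) = (o*a m + a m*o) * a 1 - a 1 * (o*a m + a m*o) := by
  unfold Cmt
  rw [ht3 m hm, smul_mul_assoc, mul_smul_comm, ← smul_sub, smul_smul,
    mul_inv_cancel₀ h2, one_smul]

variable (h2 : (2:k) ≠ 0) (ha0 : a 0 = 1)
  (ht1 : ∀ m n, a m * a n = a n * a m)
  (ht2 : ∀ m, o * o * a m = a m * (o * o))
  (ht3 : ∀ m, 1 ≤ m → o * a (m+1) - a (m+1) * o
      = (2:k)⁻¹ • (o * a m + a m * o) * a 1 - a 1 * ((2:k)⁻¹ • (o * a m + a m * o)))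

include h2 ha0 ht1 ht3 in
lemma ab_h4 (m : ℕ) :
    (2:k) • Cmt o a (m+1) = Cmt o a 1 * a m + a m * Cmt o a 1 := by
  rcases Nat.eq_zero_or_pos m with hm | hm
  · subst hm; rw [ha0, mul_one, one_mul, two_smul]
  · rw [ab_t3u o a h2 ht3 m hm]
    have h0 : a m * a 1 - a 1 * a m = 0 := sub_eq_zero_of_eq (ht1 m 1)
    have key : (o*a m + a m*o)*a 1 - a 1*(o*a m + a m*o)
        - (Cmt o a 1 * a m + a m * Cmt o a 1)
        = o * (a m * a 1 - a 1 * a m) + (a m * a 1 - a 1 * a m) * o := by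
      unfold Cmt; noncomm_ring
    rw [h0, mul_zero, zero_mul, add_zero] at key
    exact sub_eq_zero.mp key

include ht1 in
lemma ab_h6 (m n : ℕ) :
    Cmt o a m * a n - a n * Cmt o a m = Cmt o a n * a m - a m * Cmt o a n := by
  have h0 : a m * a n - a n * a m = 0 := sub_eq_zero_of_eq (ht1 m n)
  have key : (Cmt o a m * a n - a n * Cmt o a m) - (Cmt o a n * a m - a m * Cmt o a n)
      = o * (a m * a n - a n * a m) - (a m * a n - a n * a m) * o := by
    unfold Cmt; noncomm_ring
  rw [h0, mul_zero, zero_mul, sub_zero] at key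
  exact sub_eq_zero.mp key

include h2 ha0 ht1 ht2 ht3 in
lemma ab_h5 (m : ℕ) : Cmt o a 1 * Cmt o a m = Cmt o a m * Cmt o a 1 := by
  rcases Nat.eq_zero_or_pos m with hm | hm
  · subst hm; rw [ab_c0 o a ha0, mul_zero, zero_mul]
  · have hD : (2:k) • Cmt o a (m+1) = Cmt o a 1 * a m + a m * Cmt o a 1 :=
      ab_h4 o a h2 ha0 ht1 ht3 m
    have hb : (o*a m + a m*o) * a 1 - a 1*(o*a m + a m*o)
        = Cmt o a 1 * a m + a m * Cmt o a 1 :=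
      (ab_t3u o a h2 ht3 m hm).symm.trans hD
    have f1 : o * (Cmt o a 1 * a m + a m * Cmt o a 1)
        + (Cmt o a 1 * a m + a m * Cmt o a 1) * o = 0 := by
      rw [← hD, mul_smul_comm, smul_mul_assoc, ← smul_add, ab_anti o a ht2 (m+1), smul_zero]
    have jac : o * (Cmt o a 1 * a m + a m * Cmt o a 1)
          - (Cmt o a 1 * a m + a m * Cmt o a 1) * o
        = ((o*(o*a m + a m*o) - (o*a m + a m*o)*o) * a 1
            - a 1 * (o*(o*a m + a m*o) - (o*a m + a m*o)*o))
          + ((o*a m + a m*o) * Cmt o a 1 - Cmt o a 1 * (o*a m + a m*o)) := by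
      rw [← hb]; unfold Cmt; noncomm_ring
    have hOG : o*(o*a m + a m*o) - (o*a m + a m*o)*o = o*o*a m - a m*(o*o) := by
      noncomm_ring
    rw [hOG, ht2 m, sub_self, zero_mul, mul_zero, sub_zero, zero_add] at jac
    have hOD : o * (Cmt o a 1 * a m + a m * Cmt o a 1)
        = -((Cmt o a 1 * a m + a m * Cmt o a 1) * o) := eq_neg_of_add_eq_zero_left f1
    rw [hOD] at jac
    have cert : Cmt o a m * Cmt o a 1 - Cmt o a 1 * Cmt o a m
        = ((o*a m + a m*o) * Cmt o a 1 - Cmt o a 1 * (o*a m + a m*o))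
          + ((Cmt o a 1 * a m + a m * Cmt o a 1) * o
              + (Cmt o a 1 * a m + a m * Cmt o a 1) * o)
          - (a m * (o*o*a 1 - a 1*(o*o)) + a m * (o*o*a 1 - a 1*(o*o))) := by
      unfold Cmt; noncomm_ring
    rw [← jac] at cert
    symm
    rw [← sub_eq_zero, cert, ht2 1, sub_self, mul_zero, add_zero, sub_zero]
    abel

lemma ab_mid (X P Q A B : R) (hp : X*Q = Q*X) (hq : X*P = P*X)
    (hh : A*Q - Q*A = B*P - P*B) :
    (X*A + A*X)*Q - Q*(X*A + A*X) = -(P*(X*B + B*X) - (X*B + B*X)*P) := by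
  have hp0 : X*Q - Q*X = 0 := sub_eq_zero_of_eq hp
  have hq0 : P*X - X*P = 0 := sub_eq_zero_of_eq hq.symm
  calc (X*A + A*X)*Q - Q*(X*A + A*X)
      = (X*(A*Q - Q*A) + (A*Q - Q*A)*X) + (A*(X*Q - Q*X) + (X*Q - Q*X)*A) := by
        noncomm_ring
    _ = X*(B*P - P*B) + (B*P - P*B)*X := by
        rw [hh, hp0, mul_zero, zero_mul, add_zero, add_zero]
    _ = -(P*(X*B + B*X) - (X*B + B*X)*P) + (B*(P*X - X*P) + (P*X - X*P)*B) := by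
        noncomm_ring
    _ = -(P*(X*B + B*X) - (X*B + B*X)*P) := by
        rw [hq0, mul_zero, zero_mul, add_zero, add_zero]

include h2 ha0 ht1 ht2 ht3 in
lemma ab_h7 (m n : ℕ) : Cmt o a m * Cmt o a n = Cmt o a n * Cmt o a m := by
  induction m generalizing n with
  | zero => rw [ab_c0 o a ha0, zero_mul, mul_zero]
  | succ m ih =>
    have hmn : Cmt o a m * Cmt o a (n+1) = Cmt o a (n+1) * Cmt o a m := ih (n+1)
    apply smul_cancel₂ h2
    calc (2:k) • (Cmt o a (m+1) * Cmt o a n)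
        = ((2:k) • Cmt o a (m+1)) * Cmt o a n := (smul_mul_assoc _ _ _).symm
      _ = (Cmt o a 1 * a m + a m * Cmt o a 1) * Cmt o a n := by
          rw [ab_h4 o a h2 ha0 ht1 ht3 m]
      _ = Cmt o a n * (Cmt o a 1 * a m + a m * Cmt o a 1) := by
          have hh : a m * Cmt o a n - Cmt o a n * a m
              = a n * Cmt o a m - Cmt o a m * a n := by
            have h := ab_h6 o a ht1 n m
            have := congrArg Neg.neg h
            simpa [neg_sub] using this
          have hmid := ab_mid (Cmt o a 1) (Cmt o a m) (Cmt o a n) (a m) (a n)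
            (ab_h5 o a h2 ha0 ht1 ht2 ht3 n) (ab_h5 o a h2 ha0 ht1 ht2 ht3 m) hh
          -- hmid : (X*am + am*X)*cn - cn*(X*am + am*X) = -(cm*(X*an + an*X) - (X*an + an*X)*cm)
          have hn4 : (2:k) • Cmt o a (n+1) = Cmt o a 1 * a n + a n * Cmt o a 1 :=
            ab_h4 o a h2 ha0 ht1 ht3 n
          have hz : Cmt o a m * (Cmt o a 1 * a n + a n * Cmt o a 1)
              - (Cmt o a 1 * a n + a n * Cmt o a 1) * Cmt o a m = 0 := by
            rw [← hn4, mul_smul_comm, smul_mul_assoc, ← smul_sub,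
              sub_eq_zero_of_eq hmn, smul_zero]
          rw [hz, neg_zero] at hmid
          exact sub_eq_zero.mp hmid
      _ = Cmt o a n * ((2:k) • Cmt o a (m+1)) := by
          rw [ab_h4 o a h2 ha0 ht1 ht3 m]
      _ = (2:k) • (Cmt o a n * Cmt o a (m+1)) := by rw [mul_smul_comm]

include ht1 in
lemma ab_GA (x y : ℕ) :
    (o*a x + a x*o)*a y - a y*(o*a x + a x*o) = Cmt o a y * a x + a x * Cmt o a y := by
  have cert : (o*a x + a x*o)*a y - a y*(o*a x + a x*o)
      - (Cmt o a y * a x + a x * Cmt o a y)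
      = o*(a x*a y - a y*a x) + (a x*a y - a y*a x)*o := by
    unfold Cmt; noncomm_ring
  rw [sub_eq_zero_of_eq (ht1 x y), mul_zero, zero_mul, add_zero] at cert
  exact sub_eq_zero.mp cert

include h2 ha0 ht1 ht2 ht3 in
lemma ab_g (x y : ℕ) :
    (o*a x + a x*o) * (o*a y + a y*o) = (o*a y + a y*o) * (o*a x + a x*o) := by
  have h7 := ab_h7 o a h2 ha0 ht1 ht2 ht3 x y
  have cert : (o*a x + a x*o)*(o*a y + a y*o) - (o*a y + a y*o)*(o*a x + a x*o)
      - (Cmt o a x * Cmt o a y - Cmt o a y * Cmt o a x)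
      = (o*(a x*a y - a y*a x)*o + o*(a x*a y - a y*a x)*o)
        + ((a x*a y - a y*a x)*(o*o) + (a x*a y - a y*a x)*(o*o))
        + (a x*(o*o*a y - a y*(o*o)) + a x*(o*o*a y - a y*(o*o)))
        - (a y*(o*o*a x - a x*(o*o)) + a y*(o*o*a x - a x*(o*o))) := by
    unfold Cmt; noncomm_ring
  rw [sub_eq_zero_of_eq (ht1 x y), sub_eq_zero_of_eq (ht2 y), sub_eq_zero_of_eq (ht2 x),
    sub_eq_zero_of_eq h7] at cert
  simp only [mul_zero, zero_mul, add_zero, sub_zero, zero_add] at cert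
  exact sub_eq_zero.mp cert

include h2 ha0 ht1 ht3 in
lemma ab_hcc (x y : ℕ) :
    Cmt o a (y+1) * a x + a x * Cmt o a (y+1)
      = Cmt o a (x+1) * a y + a y * Cmt o a (x+1) := by
  apply smul_cancel₂ h2
  calc (2:k) • (Cmt o a (y+1) * a x + a x * Cmt o a (y+1))
      = ((2:k) • Cmt o a (y+1)) * a x + a x * ((2:k) • Cmt o a (y+1)) := by
        rw [smul_mul_assoc, mul_smul_comm, smul_add]
    _ = (Cmt o a 1 * a y + a y * Cmt o a 1) * a x
        + a x * (Cmt o a 1 * a y + a y * Cmt o a 1) := by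
        rw [ab_h4 o a h2 ha0 ht1 ht3 y]
    _ = (Cmt o a 1 * a x + a x * Cmt o a 1) * a y
        + a y * (Cmt o a 1 * a x + a x * Cmt o a 1) := by
        have cert : ((Cmt o a 1 * a y + a y * Cmt o a 1) * a x
              + a x * (Cmt o a 1 * a y + a y * Cmt o a 1))
            - ((Cmt o a 1 * a x + a x * Cmt o a 1) * a y
              + a y * (Cmt o a 1 * a x + a x * Cmt o a 1))
            = Cmt o a 1 * (a y * a x - a x * a y) + (a x * a y - a y * a x) * Cmt o a 1 := by
          noncomm_ring
        rw [sub_eq_zero_of_eq (ht1 y x), sub_eq_zero_of_eq (ht1 x y),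
          mul_zero, zero_mul, add_zero] at cert
        exact sub_eq_zero.mp cert
    _ = ((2:k) • Cmt o a (x+1)) * a y + a y * ((2:k) • Cmt o a (x+1)) := by
        rw [ab_h4 o a h2 ha0 ht1 ht3 x]
    _ = (2:k) • (Cmt o a (x+1) * a y + a y * Cmt o a (x+1)) := by
        rw [smul_mul_assoc, mul_smul_comm, smul_add]

include ht1 in
lemma ab_S1 (x y : ℕ) :
    a x*(o*a y + a y*o) + (o*a y + a y*o)*a x
      = (o*a x + a x*o)*a y + a y*(o*a x + a x*o) := by
  have cert : (a x*(o*a y + a y*o) + (o*a y + a y*o)*a x)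
      - ((o*a x + a x*o)*a y + a y*(o*a x + a x*o))
      = (a x*a y - a y*a x)*o + o*(a y*a x - a x*a y) := by
    noncomm_ring
  rw [sub_eq_zero_of_eq (ht1 x y), sub_eq_zero_of_eq (ht1 y x),
    mul_zero, zero_mul, add_zero] at cert
  exact sub_eq_zero.mp cert

include h2 ha0 ht1 ht3 in
lemma ab_S2 (x y : ℕ) :
    (o*a x + a x*o) * a (y+1) - a (y+1) * (o*a x + a x*o)
      = (o*a y + a y*o) * a (x+1) - a (x+1) * (o*a y + a y*o) := by
  rw [ab_GA o a ht1 x (y+1), ab_GA o a ht1 y (x+1)]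
  exact ab_hcc o a h2 ha0 ht1 ht3 x y

lemma ab_osq (e E E' : R) (ht : e*E + E*e = E' + E') (hc : e*E' = E'*e) :
    e*e*E = E*(e*e) := by
  have h0 : e*E + E*e - (E' + E') = 0 := sub_eq_zero_of_eq ht
  have h1 : e*E' - E'*e = 0 := sub_eq_zero_of_eq hc
  have cert : e*e*E - E*(e*e)
      = e*(e*E + E*e - (E' + E')) - (e*E + E*e - (E' + E'))*e
        + ((e*E' - E'*e) + (e*E' - E'*e)) := by noncomm_ring
  rw [h0, h1, mul_zero, zero_mul, sub_zero, add_zero, add_zero] at cert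
  exact sub_eq_zero.mp cert

lemma ab_third_phi (e1 E2 E2r E2r1 E2r2 : R)
    (hodd : E2r1 = (2:k)⁻¹ • (e1*E2r + E2r*e1))
    (hcomm : E2r1*E2 - E2*E2r1 = e1*E2r2 - E2r2*e1) :
    e1*E2r2 - E2r2*e1
      = (2:k)⁻¹ • (e1*E2r + E2r*e1) * E2 - E2 * ((2:k)⁻¹ • (e1*E2r + E2r*e1)) := by
  rw [← hodd]; exact hcomm.symm

lemma ab_smul_sub (c : k) {u v w z : R} (h : u*v - v*u = w*z - z*w) :
    (c • u)*v - v*(c • u) = (c • w)*z - z*(c • w) := by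
  rw [smul_mul_assoc, mul_smul_comm, ← smul_sub, smul_mul_assoc, mul_smul_comm,
    ← smul_sub, h]

lemma ab_half (x : R) (h2 : (2:k) ≠ 0) : (2:k)⁻¹ • (x + x) = x := by
  rw [← two_smul k, smul_smul, inv_mul_cancel₀ h2, one_smul]

end Abstract

end Stmt10Aux

namespace Stmt10Aux

variable {k : Type*} [Field k]

lemma esym_zero : esym k 0 = 1 := by
  have := RingQuot.mkAlgHom_rel k (OSymRel.unit (k := k))
  simpa [esym] using this

lemma esym_comm (r s : ℕ) (hs : 1 ≤ s) (hpar : r % 2 = s % 2) :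
    esym k r * esym k s = esym k s * esym k r := by
  have := RingQuot.mkAlgHom_rel k (OSymRel.comm (k := k) r s hs hpar)
  simpa [esym, map_mul] using this

lemma esym_skew (r s : ℕ) (hs : 1 ≤ s) (hpar : r % 2 ≠ s % 2) :
    esym k r * esym k s + (-1 : OSym k) ^ r * (esym k s * esym k r) =
      (-1 : OSym k) ^ r * (esym k (r+1) * esym k (s-1)) + esym k (s-1) * esym k (r+1) := by
  have := RingQuot.mkAlgHom_rel k (OSymRel.skew (k := k) r s hs hpar)
  simpa [esym, map_mul, map_add, map_pow, map_neg, map_one] using this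

lemma two_esym_odd (r : ℕ) :
    esym k 1 * esym k (2*r) + esym k (2*r) * esym k 1 = esym k (2*r+1) + esym k (2*r+1) := by
  have h := esym_skew (k := k) (2*r) 1 le_rfl (by omega)
  have hp : (-1 : OSym k) ^ (2*r) = 1 := by rw [pow_mul]; norm_num
  rw [hp, one_mul, one_mul, Nat.sub_self, esym_zero, mul_one, one_mul] at h
  rw [add_comm] at h
  exact h

lemma esym_odd (h2 : (2:k) ≠ 0) (r : ℕ) :
    esym k (2*r+1) = (2:k)⁻¹ • (esym k 1 * esym k (2*r) + esym k (2*r) * esym k 1) := by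
  rw [two_esym_odd, ← two_smul k, smul_smul, inv_mul_cancel₀ h2, one_smul]

lemma esym_anticomm (r s : ℕ) :
    esym k (2*r) * esym k (2*s+1) + esym k (2*s+1) * esym k (2*r) =
      esym k (2*s) * esym k (2*r+1) + esym k (2*r+1) * esym k (2*s) := by
  have h := esym_skew (k := k) (2*r) (2*s+1) (by omega) (by omega)
  have hp : (-1 : OSym k) ^ (2*r) = 1 := by rw [pow_mul]; norm_num
  rw [hp, one_mul, one_mul, show 2*s+1-1 = 2*s from by omega] at h
  rw [h, add_comm]

lemma esym_commutator (r s : ℕ) (hs : 1 ≤ s) :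
    esym k (2*r+1) * esym k (2*s) - esym k (2*s) * esym k (2*r+1) =
      esym k (2*s-1) * esym k (2*r+2) - esym k (2*r+2) * esym k (2*s-1) := by
  have h := esym_skew (k := k) (2*r+1) (2*s) (by omega) (by omega)
  have hp : (-1 : OSym k) ^ (2*r+1) = -1 := by rw [pow_succ, pow_mul]; norm_num
  rw [hp] at h
  rw [neg_one_mul (esym k (2*s) * esym k (2*r+1)),
      neg_one_mul (esym k (2*r+1+1) * esym k (2*s-1)),
      show 2*r+1+1 = 2*r+2 from rfl, ← sub_eq_add_neg, neg_add_eq_sub] at h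
  exact h

end Stmt10Aux

namespace Stmt10Aux

variable {k : Type*} [Field k]

def Oo (k : Type*) [Field k] : RingQuot (ToryRel k) :=
  RingQuot.mkAlgHom k (ToryRel k) (FreeAlgebra.ι k 0)

def Aa (k : Type*) [Field k] (m : ℕ) : RingQuot (ToryRel k) :=
  if m = 0 then 1 else RingQuot.mkAlgHom k (ToryRel k) (FreeAlgebra.ι k m)

lemma Aa_zero : Aa k 0 = 1 := if_pos rfl

lemma rt1 (m n : ℕ) : Aa k m * Aa k n = Aa k n * Aa k m := by
  unfold Aa
  by_cases hm : m = 0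
  · simp [hm]
  · by_cases hn : n = 0
    · simp [hn]
    · rw [if_neg hm, if_neg hn]
      have h := RingQuot.mkAlgHom_rel k (ToryRel.comm (k := k) m n (by omega) (by omega))
      simp only [map_mul] at h
      exact h

lemma rt2 (m : ℕ) : Oo k * Oo k * Aa k m = Aa k m * (Oo k * Oo k) := by
  unfold Oo Aa
  by_cases hm : m = 0
  · simp [hm]
  · rw [if_neg hm]
    have h := RingQuot.mkAlgHom_rel k (ToryRel.osq (k := k) m (by omega))
    simp only [map_mul] at h
    exact h

lemma rt3 (m : ℕ) (hm : 1 ≤ m) :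
    Oo k * Aa k (m+1) - Aa k (m+1) * Oo k
      = (2:k)⁻¹ • (Oo k * Aa k m + Aa k m * Oo k) * Aa k 1
        - Aa k 1 * ((2:k)⁻¹ • (Oo k * Aa k m + Aa k m * Oo k)) := by
  have h := RingQuot.mkAlgHom_rel k (ToryRel.third (k := k) m hm)
  simp only [map_sub, map_mul, map_smul, map_add] at h
  unfold Oo Aa
  rw [if_neg (Nat.succ_ne_zero m), if_neg (by omega : m ≠ 0), if_neg (one_ne_zero)]
  exact h

/-- image of `e_n` under the inverse map. -/
def Fdef (k : Type*) [Field k] (n : ℕ) : RingQuot (ToryRel k) :=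
  if n % 2 = 0 then Aa k (n/2)
  else (2:k)⁻¹ • (Oo k * Aa k (n/2) + Aa k (n/2) * Oo k)

lemma psi_rel (h2 : (2:k) ≠ 0) : ∀ ⦃x y : FreeAlgebra k ℕ⦄, OSymRel k x y →
    (FreeAlgebra.lift k (Fdef k)) x = (FreeAlgebra.lift k (Fdef k)) y := by
  have hrt1 := fun m n => rt1 (k := k) m n
  have hrt2 := fun m => rt2 (k := k) m
  have hrt3 := fun m hm => rt3 (k := k) m hm
  have ha0 := Aa_zero (k := k)
  intro x y h
  cases h with
  | unit =>
    rw [FreeAlgebra.lift_ι_apply, map_one]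
    show Fdef k 0 = 1
    simp [Fdef, Aa]
  | comm r s hs hpar =>
    rw [map_mul, map_mul, FreeAlgebra.lift_ι_apply, FreeAlgebra.lift_ι_apply]
    by_cases hr : r % 2 = 0
    · have hs0 : s % 2 = 0 := by omega
      unfold Fdef; rw [if_pos hr, if_pos hs0]; exact rt1 _ _
    · have hs1 : ¬ (s % 2 = 0) := by omega
      unfold Fdef; rw [if_neg hr, if_neg hs1]
      rw [smul_mul_assoc, mul_smul_comm, smul_mul_assoc, mul_smul_comm,
        ab_g (Oo k) (Aa k) h2 ha0 hrt1 hrt2 hrt3 (r/2) (s/2)]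
  | skew r s hs hpar =>
    simp only [map_add, map_mul, map_pow, map_neg, map_one, FreeAlgebra.lift_ι_apply]
    by_cases hr : r % 2 = 0
    · -- r even, s odd
      obtain ⟨x, rfl⟩ : ∃ x, r = 2*x := ⟨r/2, by omega⟩
      obtain ⟨y, rfl⟩ : ∃ y, s = 2*y+1 := ⟨s/2, by omega⟩
      have hneg : (-1 : RingQuot (ToryRel k)) ^ (2*x) = 1 := by rw [pow_mul]; norm_num
      rw [hneg, one_mul, one_mul]
      unfold Fdef
      rw [if_pos (by omega : (2*x) % 2 = 0), if_neg (by omega : ¬ (2*y+1) % 2 = 0),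
        if_neg (by omega : ¬ (2*x+1) % 2 = 0), if_pos (by omega : (2*y+1-1) % 2 = 0),
        show (2*x)/2 = x from by omega, show (2*y+1)/2 = y from by omega,
        show (2*x+1)/2 = x from by omega, show (2*y+1-1)/2 = y from by omega]
      -- Aa x * (2⁻¹ • g y) + (2⁻¹ • g y) * Aa x = (2⁻¹ • g x) * Aa y + Aa y * (2⁻¹ • g x)
      rw [mul_smul_comm, smul_mul_assoc, ← smul_add, smul_mul_assoc, mul_smul_comm,
        ← smul_add, ab_S1 (Oo k) (Aa k) hrt1 x y]
    · -- r odd, s even (so s ≥ 2)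
      obtain ⟨x, rfl⟩ : ∃ x, r = 2*x+1 := ⟨r/2, by omega⟩
      obtain ⟨y, rfl⟩ : ∃ y, s = 2*y+2 := ⟨s/2 - 1, by omega⟩
      have hneg : (-1 : RingQuot (ToryRel k)) ^ (2*x+1) = -1 := by
        rw [pow_succ, pow_mul]; norm_num
      rw [hneg]
      rw [neg_one_mul (Fdef k (2*y+2) * Fdef k (2*x+1)),
          neg_one_mul (Fdef k (2*x+1+1) * Fdef k (2*y+2-1)),
          ← sub_eq_add_neg, neg_add_eq_sub]
      unfold Fdef
      rw [if_neg (by omega : ¬ (2*x+1) % 2 = 0), if_pos (by omega : (2*y+2) % 2 = 0),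
        if_pos (by omega : (2*x+1+1) % 2 = 0), if_neg (by omega : ¬ (2*y+2-1) % 2 = 0),
        show (2*x+1)/2 = x from by omega, show (2*y+2)/2 = y+1 from by omega,
        show (2*x+1+1)/2 = x+1 from by omega, show (2*y+2-1)/2 = y from by omega]
      -- (2⁻¹ • g x) * Aa (y+1) - Aa (y+1) * (2⁻¹ • g x)
      --   = (2⁻¹ • g y) * Aa (x+1) - Aa (x+1) * (2⁻¹ • g y)
      exact ab_smul_sub ((2:k)⁻¹) (ab_S2 (Oo k) (Aa k) h2 ha0 hrt1 hrt3 x y)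

end Stmt10Aux

namespace Stmt10Aux

variable {k : Type*} [Field k]

def phi0 (k : Type*) [Field k] : FreeAlgebra k ℕ →ₐ[k] OSym k :=
  FreeAlgebra.lift k (fun n => if n = 0 then esym k 1 else esym k (2*n))

lemma phi_rel (h2 : (2:k) ≠ 0) : ∀ ⦃x y : FreeAlgebra k ℕ⦄, ToryRel k x y →
    phi0 k x = phi0 k y := by
  intro x y h
  cases h with
  | comm r s hr hs =>
    simp only [phi0, map_mul, FreeAlgebra.lift_ι_apply]
    rw [if_neg (by omega : ¬ r = 0), if_neg (by omega : ¬ s = 0)]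
    exact esym_comm (2*r) (2*s) (by omega) (by omega)
  | osq r hr =>
    simp only [phi0, map_mul, FreeAlgebra.lift_ι_apply]
    rw [if_true, if_neg (by omega : ¬ r = 0)]
    exact ab_osq (esym k 1) (esym k (2*r)) (esym k (2*r+1)) (two_esym_odd r)
      (esym_comm 1 (2*r+1) (by omega) (by omega))
  | third r hr =>
    simp only [phi0, map_sub, map_mul, map_smul, map_add, FreeAlgebra.lift_ι_apply]
    rw [if_true, if_neg (by omega : ¬ r+1 = 0), if_neg (by omega : ¬ r = 0),
      if_neg (one_ne_zero)]
    have hcomm : esym k (2*r+1) * esym k (2*1) - esym k (2*1) * esym k (2*r+1)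
        = esym k 1 * esym k (2*(r+1)) - esym k (2*(r+1)) * esym k 1 := by
      have h := esym_commutator (k := k) r 1 le_rfl
      rw [show 2*1-1 = 1 from rfl] at h
      rw [show 2*(r+1) = 2*r+2 from by ring]
      exact h
    exact ab_third_phi (esym k 1) (esym k (2*1)) (esym k (2*r)) (esym k (2*r+1))
      (esym k (2*(r+1))) (esym_odd h2 r) hcomm

def PhiM (h2 : (2:k) ≠ 0) : RingQuot (ToryRel k) →ₐ[k] OSym k :=
  RingQuot.liftAlgHom k ⟨phi0 k, phi_rel h2⟩

def PsiM (h2 : (2:k) ≠ 0) : OSym k →ₐ[k] RingQuot (ToryRel k) :=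
  RingQuot.liftAlgHom k ⟨FreeAlgebra.lift k (Fdef k), psi_rel h2⟩

lemma PhiM_mk (h2 : (2:k) ≠ 0) (x : FreeAlgebra k ℕ) :
    PhiM h2 (RingQuot.mkAlgHom k (ToryRel k) x) = phi0 k x :=
  RingQuot.liftAlgHom_mkAlgHom_apply k (phi0 k) (phi_rel h2) x

lemma PsiM_mk (h2 : (2:k) ≠ 0) (x : FreeAlgebra k ℕ) :
    PsiM h2 (RingQuot.mkAlgHom k (OSymRel k) x) = FreeAlgebra.lift k (Fdef k) x :=
  RingQuot.liftAlgHom_mkAlgHom_apply k _ (psi_rel h2) x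

lemma PhiM_Oo (h2 : (2:k) ≠ 0) : PhiM h2 (Oo k) = esym k 1 := by
  unfold Oo
  rw [PhiM_mk]
  simp only [phi0, FreeAlgebra.lift_ι_apply]
  rw [if_true]

lemma PhiM_Aa (h2 : (2:k) ≠ 0) (m : ℕ) : PhiM h2 (Aa k m) = esym k (2*m) := by
  by_cases hm : m = 0
  · subst hm
    rw [Aa_zero, map_one, show 2*0 = 0 from rfl, esym_zero]
  · unfold Aa
    rw [if_neg hm, PhiM_mk]
    simp only [phi0, FreeAlgebra.lift_ι_apply]
    rw [if_neg hm]

lemma PhiM_F (h2 : (2:k) ≠ 0) (n : ℕ) : PhiM h2 (Fdef k n) = esym k n := by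
  by_cases hn : n % 2 = 0
  · obtain ⟨m, rfl⟩ : ∃ m, n = 2*m := ⟨n/2, by omega⟩
    unfold Fdef
    rw [if_pos (by omega), show (2*m)/2 = m from by omega, PhiM_Aa]
  · obtain ⟨m, rfl⟩ : ∃ m, n = 2*m+1 := ⟨n/2, by omega⟩
    unfold Fdef
    rw [if_neg (by omega), show (2*m+1)/2 = m from by omega]
    rw [map_smul, map_add, map_mul, map_mul, PhiM_Oo, PhiM_Aa]
    exact (esym_odd h2 m).symm

lemma comp1 (h2 : (2:k) ≠ 0) : (PhiM (k := k) h2).comp (PsiM h2) = AlgHom.id k (OSym k) := by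
  apply RingQuot.ringQuot_ext'
  apply FreeAlgebra.hom_ext
  funext n
  simp only [AlgHom.coe_comp, Function.comp_apply, AlgHom.coe_id, id_eq]
  rw [PsiM_mk, FreeAlgebra.lift_ι_apply, PhiM_F h2 n]
  rfl

lemma comp2 (h2 : (2:k) ≠ 0) :
    (PsiM (k := k) h2).comp (PhiM h2) = AlgHom.id k (RingQuot (ToryRel k)) := by
  apply RingQuot.ringQuot_ext'
  apply FreeAlgebra.hom_ext
  funext n
  simp only [AlgHom.coe_comp, Function.comp_apply, AlgHom.coe_id, id_eq]
  rw [PhiM_mk]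
  simp only [phi0, FreeAlgebra.lift_ι_apply]
  by_cases hn : n = 0
  · subst hn
    rw [if_pos rfl]
    unfold esym
    rw [PsiM_mk, FreeAlgebra.lift_ι_apply]
    show Fdef k 1 = _
    unfold Fdef
    rw [if_neg (by omega : ¬ (1:ℕ) % 2 = 0), show (1:ℕ)/2 = 0 from rfl, Aa_zero,
      mul_one, one_mul]
    exact ab_half (Oo k) h2
  · rw [if_neg hn]
    unfold esym
    rw [PsiM_mk, FreeAlgebra.lift_ι_apply]
    show Fdef k (2*n) = _
    unfold Fdef
    rw [if_pos (by omega), show (2*n)/2 = n from by omega]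
    unfold Aa
    rw [if_neg hn]

end Stmt10Aux



open Stmt10Aux in
/-- The free (super)algebra on `o` and `e_{2r}` (`r ≥ 1`) subject only to the relations
`[e_{2r}, e_{2s}] = 0`, `[o², e_{2r}] = 0`, `[o, e_{2r+2}] = [½(o e_{2r} + e_{2r} o), e₂]`
is isomorphic to `OSym` via `o ↦ e₁`, `e_{2r} ↦ e_{2r}`; in particular in `OSym` one has
`e_{2r+1} = ½(o e_{2r} + e_{2r} o)`, and the relations `[e_{2r-1}, e_{2s}] = [e_{2s-1}, e_{2r}]`
and `e_{2r} e_{2s+1} + e_{2s+1} e_{2r} = e_{2s} e_{2r+1} + e_{2r+1} e_{2s}` hold. -/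
theorem statement10 (k : Type*) [Field k] (h2 : (2 : k) ≠ 0) :
    (∃ f : RingQuot (ToryRel k) ≃ₐ[k] OSym k,
        f (RingQuot.mkAlgHom k (ToryRel k) (FreeAlgebra.ι k 0)) = esym k 1 ∧
          ∀ r : ℕ, 1 ≤ r →
            f (RingQuot.mkAlgHom k (ToryRel k) (FreeAlgebra.ι k r)) = esym k (2 * r)) ∧
      (∀ r : ℕ,
        esym k (2 * r + 1) =
          (2 : k)⁻¹ • (esym k 1 * esym k (2 * r) + esym k (2 * r) * esym k 1)) ∧
      (∀ r s : ℕ, 1 ≤ r → 1 ≤ s →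
        esym k (2 * r - 1) * esym k (2 * s) - esym k (2 * s) * esym k (2 * r - 1) =
          esym k (2 * s - 1) * esym k (2 * r) - esym k (2 * r) * esym k (2 * s - 1)) ∧
      ∀ r s : ℕ,
        esym k (2 * r) * esym k (2 * s + 1) + esym k (2 * s + 1) * esym k (2 * r) =
          esym k (2 * s) * esym k (2 * r + 1) + esym k (2 * r + 1) * esym k (2 * s) := by
  constructor
  · refine ⟨AlgEquiv.ofAlgHom (PhiM h2) (PsiM h2) (comp1 h2) (comp2 h2), ?_, ?_⟩
    · show PhiM h2 (RingQuot.mkAlgHom k (ToryRel k) (FreeAlgebra.ι k 0)) = esym k 1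
      rw [PhiM_mk]
      simp only [phi0, FreeAlgebra.lift_ι_apply]
      rw [if_true]
    · intro r hr
      show PhiM h2 (RingQuot.mkAlgHom k (ToryRel k) (FreeAlgebra.ι k r)) = esym k (2*r)
      rw [PhiM_mk]
      simp only [phi0, FreeAlgebra.lift_ι_apply]
      rw [if_neg (by omega : ¬ r = 0)]
  refine ⟨fun r => esym_odd h2 r, ?_, fun r s => esym_anticomm r s⟩
  intro r s hr hs
  obtain ⟨t, rfl⟩ : ∃ t, r = t+1 := ⟨r-1, by omega⟩
  rw [show 2*(t+1) - 1 = 2*t+1 from by omega, show 2*(t+1) = 2*t+2 from by ring]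
  exact esym_commutator t s hs
end
end

section
/- In the odd polynomial algebra OPol_n with odd Demazure operators ∂_j, one has the generating function identity ∂_{n-1}∂_{n-2}⋯∂_1 · x_1^{n+r-1} = h_r^{(n)}, where h_r^{(n)} := Σ_{n ≥ i_r ≥ ⋯ ≥ i_1 ≥ 1} x_{i_r}⋯x_{i_1} is the odd complete symmetric polynomial. -/
open scoped Classical

noncomputable section

/-- Auxiliary recursive definition of odd complete symmetric polynomials:
`Gaux x j m = h_m` in variables `x 1, …, x j`, via the recursion peeling off the
leftmost (largest) variable. -/
private def Gaux {A : Type*} [Ring A] (x : ℕ → A) : ℕ → ℕ → A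
  | _, 0 => 1
  | j, m + 1 => ∑ t ∈ Finset.range j, x (t + 1) * Gaux x (t + 1) m

private lemma Gaux_zero {A : Type*} [Ring A] (x : ℕ → A) (j : ℕ) : Gaux x j 0 = 1 := rfl

private lemma Gaux_succ {A : Type*} [Ring A] (x : ℕ → A) (j m : ℕ) :
    Gaux x j (m + 1) = ∑ t ∈ Finset.range j, x (t + 1) * Gaux x (t + 1) m := rfl

private lemma Gaux_one {A : Type*} [Ring A] (x : ℕ → A) (m : ℕ) :
    Gaux x 1 m = x 1 ^ m := by
  induction m with
  | zero => simp [Gaux_zero]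
  | succ m ih => rw [Gaux_succ, Finset.sum_range_one, ih, pow_succ']

private lemma monotone_snoc {m n : ℕ} (g : Fin m → Fin n) (t : Fin n)
    (hg : Monotone g) (hle : ∀ i, g i ≤ t) : Monotone (Fin.snoc g t) := by
  intro a b
  refine Fin.lastCases ?_ (fun bb => ?_) b
  · intro _
    refine Fin.lastCases ?_ (fun aa => ?_) a
    · exact le_rfl
    · rw [Fin.snoc_castSucc, Fin.snoc_last]; exact hle aa
  · refine Fin.lastCases ?_ (fun aa => ?_) a
    · intro h
      exact absurd (lt_of_le_of_lt h (Fin.castSucc_lt_last bb)) (lt_irrefl _)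
    · intro h'
      rw [Fin.snoc_castSucc, Fin.snoc_castSucc]
      exact hg (by rwa [Fin.castSucc_le_castSucc_iff] at h')

/-- In the odd polynomial algebra `OPol_n`, one has
`∂_{n-1} ∂_{n-2} ⋯ ∂_1 (x_1^{n+r-1}) = h_r^{(n)}`, the odd complete symmetric
polynomial `h_r^{(n)} = ∑_{n ≥ i_r ≥ ⋯ ≥ i_1 ≥ 1} x_{i_r} ⋯ x_{i_1}`.  This is
formalized for any family of anticommuting odd variables `x 1, …, x n` together with
operators `D j` (`1 ≤ j ≤ n-1`) satisfying the defining properties of the odd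
Demazure operators `∂_j`.  On the right, the weakly decreasing sequences
`n ≥ i_r ≥ ⋯ ≥ i_1 ≥ 1` are encoded as monotone functions `Fin r → Fin n`. -/
theorem statement13 {k A : Type*} [Field k] [Ring A] [Algebra k A]
    (n : ℕ) (hn : 1 ≤ n) (x : ℕ → A)
    (S : ℕ → A ≃ₐ[k] A) (D : ℕ → AddMonoid.End A)
    (hx : ∀ i j : ℕ, 1 ≤ i → i < j → j ≤ n → x j * x i = -(x i * x j))
    (hS1 : ∀ j, 1 ≤ j → j + 1 ≤ n → S j (x j) = x (j + 1))
    (hS2 : ∀ j, 1 ≤ j → j + 1 ≤ n → S j (x (j + 1)) = x j)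
    (hS3 : ∀ j i, 1 ≤ j → j + 1 ≤ n → 1 ≤ i → i ≤ n → i ≠ j → i ≠ j + 1 →
      S j (x i) = -x i)
    (hD : ∀ j i, 1 ≤ j → j + 1 ≤ n → 1 ≤ i → i ≤ n →
      D j (x i) = if i = j then 1 else if i = j + 1 then -1 else 0)
    (hLeib : ∀ j, 1 ≤ j → j + 1 ≤ n → ∀ f g : A, D j (f * g) = D j f * g + S j f * D j g)
    (r : ℕ) :
    (((List.range' 1 (n - 1)).reverse.map D).prod) (x 1 ^ (n + r - 1)) =
      ∑ f ∈ Finset.univ.filter (fun f : Fin r → Fin n => Monotone f),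
        ((List.ofFn fun i => x ((f i : ℕ) + 1)).reverse).prod := by
  -- D j kills 1
  have hone : ∀ j, 1 ≤ j → j + 1 ≤ n → D j (1 : A) = 0 := by
    intro j h1 h2
    have h0 := hLeib j h1 h2 1 1
    simp only [mul_one, one_mul, map_one] at h0
    have h : D j (1 : A) + 0 = D j (1 : A) + D j (1 : A) := by rw [add_zero]; exact h0
    exact (add_left_cancel h).symm
  -- D j kills Gaux x c m for c < j
  have L1 : ∀ j, 1 ≤ j → j + 1 ≤ n → ∀ m c, c < j → D j (Gaux x c m) = 0 := by
    intro j h1 h2 m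
    induction m with
    | zero => intro c _; rw [Gaux_zero]; exact hone j h1 h2
    | succ m ih =>
      intro c hc
      rw [Gaux_succ, map_sum]
      refine Finset.sum_eq_zero fun t ht => ?_
      have htc : t + 1 ≤ c := Finset.mem_range.mp ht
      have htj : t + 1 < j := lt_of_le_of_lt htc hc
      rw [hLeib j h1 h2, hD j (t + 1) h1 h2 (Nat.succ_le_succ (Nat.zero_le t))
          (le_trans (le_of_lt htj) (le_trans (Nat.le_succ j) h2)),
        if_neg (Nat.ne_of_lt htj), if_neg (by omega), zero_mul, zero_add,
        ih (t + 1) htj, mul_zero]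
  -- the key Demazure step
  have L2 : ∀ j, 1 ≤ j → j + 1 ≤ n → ∀ m, D j (Gaux x j (m + 1)) = Gaux x (j + 1) m := by
    intro j h1 h2
    have key : ∀ m, D j (Gaux x j (m + 1)) = Gaux x j m + x (j + 1) * D j (Gaux x j m) := by
      intro m
      obtain ⟨p, rfl⟩ : ∃ p, j = p + 1 := ⟨j - 1, by omega⟩
      rw [Gaux_succ, map_sum, Finset.sum_range_succ]
      have hzero : ∀ t ∈ Finset.range p, D (p + 1) (x (t + 1) * Gaux x (t + 1) m) = 0 := by
        intro t ht
        have htp : t + 1 < p + 1 := Nat.succ_lt_succ (Finset.mem_range.mp ht)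
        rw [hLeib (p + 1) h1 h2, hD (p + 1) (t + 1) h1 h2 (Nat.succ_le_succ (Nat.zero_le t))
            (by omega), if_neg (by omega), if_neg (by omega), zero_mul, zero_add,
          L1 (p + 1) h1 h2 m (t + 1) htp, mul_zero]
      rw [Finset.sum_congr rfl hzero, Finset.sum_const_zero, zero_add,
        hLeib (p + 1) h1 h2, hD (p + 1) (p + 1) h1 h2 (by omega) (by omega), if_pos rfl,
        one_mul, hS1 (p + 1) h1 h2]
    intro m
    induction m with
    | zero => rw [key 0, Gaux_zero, Gaux_zero, hone j h1 h2, mul_zero, add_zero]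
    | succ m ih =>
      rw [key (m + 1), ih, Gaux_succ x (j + 1) m, Finset.sum_range_succ, ← Gaux_succ x j m]
  -- Part 1: the iterated composition computes Gaux
  have part1 : ∀ p m, p + 1 ≤ n →
      (((List.range' 1 p).reverse.map D).prod) (x 1 ^ (m + p)) = Gaux x (p + 1) m := by
    intro p
    induction p with
    | zero =>
      intro m _
      simp [Gaux_one]
    | succ p ih =>
      intro m hp
      rw [List.range'_1_concat, List.reverse_append, List.reverse_singleton,
        List.singleton_append, List.map_cons, List.prod_cons]
      have happ : ∀ (φ ψ : AddMonoid.End A) (a : A), (φ * ψ) a = φ (ψ a) := fun _ _ _ => rfl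
      rw [happ]
      have : m + (p + 1) = (m + 1) + p := by omega
      rw [this, ih (m + 1) (by omega)]
      have h1p : 1 + p = p + 1 := by omega
      rw [h1p, L2 (p + 1) (by omega) (by omega) m]
  -- Part 2: Gaux equals the sum over monotone functions with bounded values
  have part2 : ∀ m j, j ≤ n →
      ∑ f ∈ Finset.univ.filter
          (fun f : Fin m → Fin n => Monotone f ∧ ∀ i, (f i : ℕ) < j),
        ((List.ofFn fun i => x ((f i : ℕ) + 1)).reverse).prod = Gaux x j m := by
    intro m
    induction m with
    | zero =>
      intro j _
      rw [Gaux_zero]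
      have : (Finset.univ.filter
          (fun f : Fin 0 → Fin n => Monotone f ∧ ∀ i, (f i : ℕ) < j)) = Finset.univ := by
        refine Finset.filter_true_of_mem fun f _ => ⟨fun a => absurd a.2 (Nat.not_lt_zero _), fun i => i.elim0⟩
      rw [this]
      have hcard : (Finset.univ : Finset (Fin 0 → Fin n)).sum
          (fun f => ((List.ofFn fun i => x ((f i : ℕ) + 1)).reverse).prod) =
          (Finset.univ : Finset (Fin 0 → Fin n)).sum (fun _ => (1 : A)) := by
        refine Finset.sum_congr rfl fun f _ => ?_
        simp
      rw [hcard, Finset.sum_const]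
      simp
    | succ m ih =>
      intro j hj
      rw [Gaux_succ]
      -- rewrite RHS using ih
      have step1 : ∀ t ∈ Finset.range j, x (t + 1) * Gaux x (t + 1) m =
          ∑ g ∈ Finset.univ.filter
            (fun g : Fin m → Fin n => Monotone g ∧ ∀ i, (g i : ℕ) < t + 1),
            x (t + 1) * ((List.ofFn fun i => x ((g i : ℕ) + 1)).reverse).prod := by
        intro t ht
        rw [← Finset.mul_sum, ih (t + 1) (le_trans (Finset.mem_range.mp ht) hj)]
      rw [Finset.sum_congr rfl step1]
      -- convert sum over range j to sum over Fin n filtered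
      have step2 : ∑ t ∈ Finset.range j,
          (∑ g ∈ Finset.univ.filter
            (fun g : Fin m → Fin n => Monotone g ∧ ∀ i, (g i : ℕ) < t + 1),
            x (t + 1) * ((List.ofFn fun i => x ((g i : ℕ) + 1)).reverse).prod) =
          ∑ t ∈ Finset.univ.filter (fun t : Fin n => (t : ℕ) < j),
          (∑ g ∈ Finset.univ.filter
            (fun g : Fin m → Fin n => Monotone g ∧ ∀ i, (g i : ℕ) < (t : ℕ) + 1),
            x ((t : ℕ) + 1) * ((List.ofFn fun i => x ((g i : ℕ) + 1)).reverse).prod) := by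
        refine Finset.sum_nbij' (fun t => (⟨t % n, Nat.mod_lt _ (by omega)⟩ : Fin n))
          (fun t => (t : ℕ)) ?_ ?_ ?_ ?_ ?_
        · intro a ha
          have : a < j := Finset.mem_range.mp ha
          simp only [Finset.mem_filter, Finset.mem_univ, true_and]
          rw [Nat.mod_eq_of_lt (by omega)]
          exact this
        · intro a ha
          simp only [Finset.mem_filter, Finset.mem_univ, true_and] at ha
          exact Finset.mem_range.mpr ha
        · intro a ha
          have : a < j := Finset.mem_range.mp ha
          simp [Nat.mod_eq_of_lt (by omega : a < n)]
        · intro a _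
          apply Fin.ext
          simp [Nat.mod_eq_of_lt a.isLt]
        · intro a ha
          have : a < j := Finset.mem_range.mp ha
          simp [Nat.mod_eq_of_lt (by omega : a < n)]
      rw [step2]
      -- now the sigma bijection
      rw [Finset.sum_sigma' (Finset.univ.filter (fun t : Fin n => (t : ℕ) < j))
        (fun t => Finset.univ.filter
          (fun g : Fin m → Fin n => Monotone g ∧ ∀ i, (g i : ℕ) < (t : ℕ) + 1))
        (fun t g => x ((t : ℕ) + 1) * ((List.ofFn fun i => x ((g i : ℕ) + 1)).reverse).prod)]
      refine Finset.sum_nbij' (i := fun f : Fin (m + 1) → Fin n =>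
          (⟨f (Fin.last m), fun i => f (Fin.castSucc i)⟩ :
            Σ _t : Fin n, (Fin m → Fin n)))
          (fun p => Fin.snoc p.2 p.1) ?_ ?_ ?_ ?_ ?_
      · intro f hf
        simp only [Finset.mem_filter, Finset.mem_univ, true_and] at hf
        obtain ⟨hmono, hbd⟩ := hf
        refine Finset.mem_sigma.mpr ⟨?_, ?_⟩
        · simp only [Finset.mem_filter, Finset.mem_univ, true_and]
          exact hbd (Fin.last m)
        · simp only [Finset.mem_filter, Finset.mem_univ, true_and]
          refine ⟨fun a b hab => hmono (Fin.castSucc_le_castSucc_iff.mpr hab), fun i => ?_⟩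
          have : f (Fin.castSucc i) ≤ f (Fin.last m) := hmono (Fin.le_last _)
          omega
      · intro p hp
        rw [Finset.mem_sigma] at hp
        obtain ⟨hp1, hp2⟩ := hp
        simp only [Finset.mem_filter, Finset.mem_univ, true_and] at hp1 hp2
        obtain ⟨hmono, hbd⟩ := hp2
        simp only [Finset.mem_filter, Finset.mem_univ, true_and]
        constructor
        · exact monotone_snoc p.2 p.1 hmono (fun i => by
            have := hbd i; exact Fin.le_def.mpr (by omega))
        · intro i
          refine Fin.lastCases ?_ (fun ii => ?_) i
          · rw [Fin.snoc_last]; exact hp1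
          · rw [Fin.snoc_castSucc]
            have := hbd ii
            omega
      · intro f _
        exact Fin.snoc_init_self f
      · intro p _
        obtain ⟨t, g⟩ := p
        simp only [Fin.snoc_last, Fin.snoc_castSucc]
      · intro f hf
        show _ = x ((f (Fin.last m) : ℕ) + 1) *
          ((List.ofFn fun i => x ((f (Fin.castSucc i) : ℕ) + 1)).reverse).prod
        rw [List.ofFn_succ', List.concat_eq_append, List.reverse_append,
          List.reverse_singleton, List.singleton_append, List.prod_cons]
  -- assemble
  have hfilter : (Finset.univ.filter (fun f : Fin r → Fin n => Monotone f)) =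
      (Finset.univ.filter
        (fun f : Fin r → Fin n => Monotone f ∧ ∀ i, (f i : ℕ) < n)) := by
    refine Finset.filter_congr fun f _ => ?_
    exact ⟨fun h => ⟨h, fun i => (f i).isLt⟩, fun h => h.1⟩
  rw [hfilter, part2 r n le_rfl]
  have heq : n + r - 1 = r + (n - 1) := by omega
  rw [heq, part1 (n - 1) r (by omega)]
  congr 1
  omega
end
end

section
/- In ONH_n, with ω_n := τ_{n-1}τ_{n-2}⋯τ_1 · σ_1(ω_{n-1}) (the element τ_w for the longest element w_n, with ω_1 = 1) and ξ_n := x_{n-1}x_{n-2}²⋯x_1^{n-1}, one has ω_n · ξ_n = 1 in the polynomial representation, and consequently ω_n ξ_n ω_n = ω_n in ONH_n, so that ξ_n ω_n and ω_n ξ_n are idempotents. -/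
/-!
Write `ω_{n+1} = (τ_n ⋯ τ_1) σ_1(ω_n)` and `ξ_{n+1} = σ_1(ξ_n) x_1^n`. Everything in the image of
`σ_1` commutes with `x_1` up to sign, so by induction on `n` the claim `ω_{n+1} ξ_{n+1} = 1`
reduces to `τ_n ⋯ τ_1 x_1^n = 1`, and peeling off `τ_1` with
`τ_1 x_1^a = ∑_{b<a} x_2^b x_1^{a-1-b} + x_2^a τ_1` gives `τ_l ⋯ τ_1 x_1^a = δ_{a,l}` for `a ≤ l`.
In the polynomial representation these are identities; in `ONH_n` they hold modulo the left ideal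
generated by the `τ_j`. Since `τ_j ω_n = 0` (by `τ_j² = 0` for `j = n - 1`, otherwise by the braid
relation and induction), right multiplication by `ω_n` kills that ideal, so `(ω_n ξ_n - 1) ω_n = 0`.
-/

noncomputable section

/-- The word `(n-1, …, 1, n-1, …, 2, …, n-1)` (in the letters `1, …, n-1`), which is the
chosen reduced expression of the longest element `w_n ∈ S_n` defining
`ω_n = τ_{n-1} τ_{n-2} ⋯ τ_1 · σ_1(ω_{n-1})`. -/
def omegaWord (n : ℕ) : List ℕ :=
  (List.range' 1 (n - 1)).foldr (fun j acc => (List.range' j (n - j)).reverse ++ acc) []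

namespace OddNilHecke

lemma map_succ_range' (s n : ℕ) : (List.range' s n).map (· + 1) = List.range' (s + 1) n := by
  simpa [add_comm] using List.map_add_range' (a := 1) s n 1

lemma omegaWord_eq_flatMap (n : ℕ) :
    omegaWord n = (List.range' 1 (n - 1)).flatMap fun j => (List.range' j (n - j)).reverse := by
  unfold omegaWord
  induction List.range' 1 (n - 1) <;> simp_all

lemma omegaWord_succ (n : ℕ) :
    omegaWord (n + 1) = (List.range' 1 n).reverse ++ (omegaWord n).map (· + 1) := by
  rcases n with _ | m
  · rfl
  rw [omegaWord_eq_flatMap, omegaWord_eq_flatMap]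
  simp only [Nat.add_sub_cancel]
  conv_lhs => rw [List.range'_succ, List.flatMap_cons, ← map_succ_range' 1 m, List.flatMap_map]
  rw [List.map_flatMap]
  congr 2
  funext j
  rw [← map_succ_range', List.map_reverse]
  congr 3
  omega

lemma mem_omegaWord {n j : ℕ} (hj : j ∈ omegaWord n) : 1 ≤ j ∧ j < n := by
  simp only [omegaWord_eq_flatMap, List.mem_flatMap, List.mem_reverse, List.mem_range'_1] at hj
  omega

section Monoid

variable {M : Type*} [Monoid M]

def descProd (f : ℕ → M) (a : ℕ) : ℕ → M
  | 0 => 1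
  | l + 1 => f (a + l) * descProd f a l

def omegaProd (T : ℕ → M) (n : ℕ) : M := ((omegaWord n).map T).prod

def xiMonomial (X : ℕ → M) (n : ℕ) : M :=
  ((List.range (n - 1)).map fun i => X (n - 1 - i) ^ (i + 1)).prod

@[simp] lemma descProd_zero (f : ℕ → M) (a : ℕ) : descProd f a 0 = 1 := rfl

lemma descProd_succ (f : ℕ → M) (a l : ℕ) : descProd f a (l + 1) = f (a + l) * descProd f a l :=
  rfl

lemma descProd_add (f : ℕ → M) (a l m : ℕ) :
    descProd f a (m + l) = descProd f (a + l) m * descProd f a l := by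
  induction m with
  | zero => simp
  | succ m ih =>
    rw [Nat.add_right_comm, descProd_succ, ih, descProd_succ, mul_assoc, Nat.add_assoc,
      Nat.add_comm l m]

lemma descProd_shift (f : ℕ → M) (a l : ℕ) :
    descProd (fun i => f (i + 1)) a l = descProd f (a + 1) l := by
  induction l with
  | zero => rfl
  | succ l ih => rw [descProd_succ, descProd_succ, ih, Nat.add_right_comm]

lemma prod_map_range'_reverse (f : ℕ → M) (a l : ℕ) :
    ((List.range' a l).reverse.map f).prod = descProd f a l := by
  induction l with
  | zero => rfl
  | succ l ih =>
    rw [List.range'_concat, List.reverse_append, List.map_append, List.prod_append, ih]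
    simp [descProd_succ]

lemma semiconjBy_descProd {x : M} {f g : ℕ → M} {a l : ℕ}
    (h : ∀ k, a ≤ k → k < a + l → SemiconjBy x (f k) (g k)) :
    SemiconjBy x (descProd f a l) (descProd g a l) := by
  induction l with
  | zero => exact SemiconjBy.one_right x
  | succ l ih =>
    exact (h _ le_self_add (by omega)).mul_right (ih fun k hk hkl => h k hk (by omega))

@[simp] lemma omegaProd_zero (T : ℕ → M) : omegaProd T 0 = 1 := rfl

lemma omegaProd_succ (T : ℕ → M) (n : ℕ) :
    omegaProd T (n + 1) = descProd T 1 n * omegaProd (fun j => T (j + 1)) n := by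
  rw [omegaProd, omegaWord_succ, List.map_append, List.prod_append, prod_map_range'_reverse,
    List.map_map]
  rfl

@[simp] lemma xiMonomial_zero (X : ℕ → M) : xiMonomial X 0 = 1 := rfl

lemma xiMonomial_succ (X : ℕ → M) (n : ℕ) :
    xiMonomial X (n + 1) = xiMonomial (fun i => X (i + 1)) n * X 1 ^ n := by
  rcases n with _ | m
  · simp [xiMonomial]
  simp only [xiMonomial, Nat.add_sub_cancel]
  rw [List.range_succ, List.map_append, List.prod_append]
  simp only [List.map_cons, List.map_nil, List.prod_cons, List.prod_nil, mul_one]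
  congr 1
  · refine congrArg List.prod (List.map_congr_left fun i hi => ?_)
    rw [List.mem_range] at hi
    congr 2
    omega
  · rw [Nat.add_sub_cancel_left]

end Monoid

section Ring

variable {A : Type*} [Ring A]

lemma semiconjBy_neg {a b : A} (h : a * b = -(b * a)) : SemiconjBy a b (-b) := by
  rwa [SemiconjBy, neg_mul]

lemma sum_pow_mul_pow_succ (x y : A) (a : ℕ) :
    ∑ b ∈ Finset.range (a + 1), y ^ b * x ^ (a - b)
      = (∑ b ∈ Finset.range a, y ^ b * x ^ (a - 1 - b)) * x + y ^ a := by
  rw [Finset.sum_range_succ, Nat.sub_self, pow_zero, mul_one, Finset.sum_mul]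
  congr 1
  refine Finset.sum_congr rfl fun b hb => ?_
  rw [Finset.mem_range] at hb
  rw [mul_assoc, ← pow_succ]
  congr 2
  omega

lemma sum_ite_mul_pow (y : A) {a len : ℕ} (ha : a ≤ len + 1) :
    ∑ b ∈ Finset.range a, (if b = len then 1 else 0) * y ^ (a - 1 - b)
      = if a = len + 1 then 1 else 0 := by
  simp only [ite_mul, one_mul, zero_mul, Finset.sum_ite_eq', Finset.mem_range]
  by_cases h : a = len + 1
  · rw [if_pos (by omega), if_pos h, h, Nat.add_sub_cancel, Nat.sub_self, pow_zero]
  · rw [if_neg (by omega), if_neg h]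

lemma mul_pow_eq_sum_add {t x y : A} (h : t * x = 1 + y * t) (a : ℕ) :
    t * x ^ a = ∑ b ∈ Finset.range a, y ^ b * x ^ (a - 1 - b) + y ^ a * t := by
  induction a with
  | zero => simp
  | succ a ih =>
    rw [pow_succ, ← mul_assoc, ih, add_mul, mul_assoc (y ^ a), h, Nat.add_sub_cancel,
      sum_pow_mul_pow_succ, mul_add, mul_one, ← mul_assoc, ← pow_succ]
    abel

structure OddNilCoxeterRelations (T : ℕ → A) (n : ℕ) : Prop where
  anticomm : ∀ i j : ℕ, 1 ≤ i → 1 ≤ j → i + 1 < j → j + 1 ≤ n →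
    T i * T j = -(T j * T i)
  mul_self : ∀ j, 1 ≤ j → j + 1 ≤ n → T j * T j = 0
  braid : ∀ j, 1 ≤ j → j + 2 ≤ n → T j * T (j + 1) * T j = -(T (j + 1) * T j * T (j + 1))

structure ONHRelations (X T : ℕ → A) (n : ℕ) : Prop extends OddNilCoxeterRelations T n where
  X_anticomm : ∀ i j : ℕ, 1 ≤ i → i ≤ n → 1 ≤ j → j + 1 ≤ n → i ≠ j → i ≠ j + 1 →
    X i * T j = -(T j * X i)
  T_mul_X : ∀ j, 1 ≤ j → j + 1 ≤ n → T j * X j - X (j + 1) * T j = 1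

lemma OddNilCoxeterRelations.shift {T : ℕ → A} {n : ℕ}
    (h : OddNilCoxeterRelations T (n + 1)) : OddNilCoxeterRelations (fun j => T (j + 1)) n where
  anticomm i j _ _ _ _ := h.anticomm (i + 1) (j + 1) (by omega) (by omega) (by omega) (by omega)
  mul_self j _ _ := h.mul_self (j + 1) (by omega) (by omega)
  braid j _ _ := h.braid (j + 1) (by omega) (by omega)

lemma ONHRelations.shift {X T : ℕ → A} {n : ℕ} (h : ONHRelations X T (n + 1)) :
    ONHRelations (fun i => X (i + 1)) (fun j => T (j + 1)) n where
  toOddNilCoxeterRelations := h.toOddNilCoxeterRelations.shift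
  X_anticomm i j _ _ _ _ _ _ :=
    h.X_anticomm (i + 1) (j + 1) (by omega) (by omega) (by omega) (by omega) (by omega)
      (by omega)
  T_mul_X j _ _ := h.T_mul_X (j + 1) (by omega) (by omega)

theorem T_mul_omegaProd {T : ℕ → A} {n j : ℕ} (h : OddNilCoxeterRelations T n) (hj : 1 ≤ j)
    (hjn : j < n) : T j * omegaProd T n = 0 := by
  induction n generalizing T j with
  | zero => omega
  | succ n ih =>
    obtain ⟨i, rfl⟩ : ∃ i, j = i + 1 := ⟨j - 1, by omega⟩
    rw [omegaProd_succ]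
    rcases Nat.lt_succ_iff_lt_or_eq.1 hjn with hjn | rfl
    · obtain ⟨m, rfl⟩ : ∃ m, n = m + (i + 2) := ⟨n - (i + 2), by omega⟩
      set Ω := omegaProd (fun j => T (j + 1)) (m + (i + 2))
      have hΩ : T (i + 2) * Ω = 0 := ih h.shift (j := i + 1) (by omega) (by omega)
      -- `τ_{i+1}` passes `τ_{m+i+2} ⋯ τ_{i+3}` and `τ_{i+2}` passes `τ_i ⋯ τ_1` up to signs,
      -- which do not matter since the product vanishes
      have hU : SemiconjBy (T (i + 1)) (descProd T (i + 3) m) (descProd (-T ·) (i + 3) m) :=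
        semiconjBy_descProd fun _ _ _ =>
          semiconjBy_neg (h.anticomm _ _ (by omega) (by omega) (by omega) (by omega))
      have hL : SemiconjBy (T (i + 2)) (descProd T 1 i) (descProd (-T ·) 1 i) :=
        semiconjBy_descProd fun _ _ _ => semiconjBy_neg <| neg_eq_iff_eq_neg.1
          (h.anticomm _ _ (by omega) (by omega) (by omega) (by omega)).symm
      have hsplit : descProd T 1 (m + (i + 2))
          = descProd T (i + 3) m * (T (i + 2) * T (i + 1) * descProd T 1 i) := by
        rw [descProd_add, descProd_succ, descProd_succ]
        simp only [mul_assoc, Nat.add_comm 1, Nat.add_assoc]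
      set U' := descProd (-T ·) (i + 3) m
      calc T (i + 1) * (descProd T 1 (m + (i + 2)) * Ω)
          = U' * (T (i + 1) * T (i + 2) * T (i + 1) * (descProd T 1 i * Ω)) := by
            rw [hsplit, mul_assoc, ← mul_assoc (T (i + 1)), hU.eq]
            simp only [mul_assoc]
        _ = -(U' * (T (i + 2) * T (i + 1)) * (T (i + 2) * descProd T 1 i * Ω)) := by
            rw [h.braid _ hj (by omega)]
            simp only [neg_mul, mul_neg, mul_assoc]
        _ = 0 := by rw [hL.eq, mul_assoc (descProd _ 1 i), hΩ, mul_zero, mul_zero, neg_zero]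
    · rw [descProd_succ, ← mul_assoc, ← mul_assoc, Nat.add_comm 1 i, h.mul_self _ hj le_rfl,
        zero_mul, zero_mul]

def tauIdeal (T : ℕ → A) (n : ℕ) : Ideal A := Ideal.span (T '' Set.Ico 1 n)

lemma T_mem_tauIdeal {T : ℕ → A} {n j : ℕ} (hj : 1 ≤ j) (hjn : j < n) : T j ∈ tauIdeal T n :=
  Ideal.subset_span ⟨j, ⟨hj, hjn⟩, rfl⟩

lemma mul_mem_of_mem_span {s : Set A} {J : Ideal A} {y z : A} (hy : y ∈ Ideal.span s)
    (hs : ∀ t ∈ s, t * z ∈ J) : y * z ∈ J :=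
  (Submodule.span_le (p := Submodule.comap (LinearMap.toSpanSingleton A A z) J)).2 hs hy

lemma mul_X_one_pow_mem_tauIdeal {X T : ℕ → A} {n : ℕ} (h : ONHRelations X T (n + 1)) {y : A}
    (hy : y ∈ tauIdeal (fun j => T (j + 1)) n) (c : ℕ) : y * X 1 ^ c ∈ tauIdeal T (n + 1) := by
  refine mul_mem_of_mem_span hy ?_
  rintro _ ⟨j, ⟨hj, hjn⟩, rfl⟩
  have hX : SemiconjBy (T (j + 1)) (X 1) (-X 1) := semiconjBy_neg <| neg_eq_iff_eq_neg.1
    (h.X_anticomm 1 (j + 1) le_rfl (by omega) (by omega) (by omega) (by omega) (by omega)).symm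
  rw [(hX.pow_right c).eq]
  exact Ideal.mul_mem_left _ _ (T_mem_tauIdeal (by omega) (by omega))

theorem descProd_mul_X_one_pow_sub_mem {X T : ℕ → A} {n len a : ℕ} (h : ONHRelations X T n)
    (hlen : len < n) (ha : a ≤ len) :
    descProd T 1 len * X 1 ^ a - (if a = len then 1 else 0) ∈ tauIdeal T n := by
  induction len generalizing X T n a with
  | zero =>
    obtain rfl : a = 0 := by omega
    simp
  | succ len ih =>
    obtain ⟨m, rfl⟩ : ∃ m, n = m + 1 := ⟨n - 1, by omega⟩
    have hT : T 1 * X 1 ^ a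
        = ∑ b ∈ Finset.range a, X 2 ^ b * X 1 ^ (a - 1 - b) + X 2 ^ a * T 1 :=
      mul_pow_eq_sum_add (sub_eq_iff_eq_add.1 (h.T_mul_X 1 le_rfl (by omega))) a
    have hsplit : descProd T 1 (len + 1) * X 1 ^ a - (if a = len + 1 then 1 else 0)
        = ∑ b ∈ Finset.range a,
            (descProd T 2 len * X 2 ^ b - if b = len then 1 else 0) * X 1 ^ (a - 1 - b)
          + descProd T 2 len * X 2 ^ a * T 1 := by
      rw [← sum_ite_mul_pow (X 1) ha, descProd_add T 1 1 len, descProd_succ, descProd_zero,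
        mul_one, mul_assoc, hT, mul_add, Finset.mul_sum]
      simp only [sub_mul, Finset.sum_sub_distrib, mul_assoc]
      abel
    rw [hsplit]
    refine add_mem (Ideal.sum_mem _ fun b hb => ?_)
      (Ideal.mul_mem_left _ _ (T_mem_tauIdeal le_rfl (by omega)))
    have hb' := ih h.shift (by omega) (a := b) (by have := Finset.mem_range.1 hb; omega)
    rw [descProd_shift] at hb'
    exact mul_X_one_pow_mem_tauIdeal h hb' _

theorem omegaProd_mul_xiMonomial_sub_one_mem {X T : ℕ → A} {n : ℕ}
    (h : ONHRelations X T n) : omegaProd T n * xiMonomial X n - 1 ∈ tauIdeal T n := by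
  induction n generalizing X T with
  | zero => simp
  | succ n ih =>
    rw [omegaProd_succ, xiMonomial_succ]
    set y := omegaProd (fun j => T (j + 1)) n * xiMonomial (fun i => X (i + 1)) n - 1
    have hsplit : descProd T 1 n * omegaProd (fun j => T (j + 1)) n
          * (xiMonomial (fun i => X (i + 1)) n * X 1 ^ n) - 1
        = (descProd T 1 n * X 1 ^ n - 1) + descProd T 1 n * (y * X 1 ^ n) := by
      simp only [y, sub_mul, mul_sub, one_mul, mul_assoc]
      abel
    rw [hsplit]
    have hchain := descProd_mul_X_one_pow_sub_mem h (Nat.lt_succ_self n) le_rfl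
    rw [if_pos rfl] at hchain
    exact add_mem hchain
      (Ideal.mul_mem_left _ _ (mul_X_one_pow_mem_tauIdeal h (ih h.shift) n))

theorem omegaProd_mul_xiMonomial_mul_omegaProd {X T : ℕ → A} {n : ℕ}
    (h : ONHRelations X T n) : omegaProd T n * xiMonomial X n * omegaProd T n = omegaProd T n := by
  have hkill : (omegaProd T n * xiMonomial X n - 1) * omegaProd T n ∈ (⊥ : Ideal A) :=
    mul_mem_of_mem_span (omegaProd_mul_xiMonomial_sub_one_mem h) fun _ ⟨j, ⟨hj, hjn⟩, hj'⟩ => by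
      rw [← hj', T_mul_omegaProd h.toOddNilCoxeterRelations hj hjn]
      exact zero_mem _
  rwa [Ideal.mem_bot, sub_mul, one_mul, sub_eq_zero] at hkill

end Ring

section Polynomial

variable {P : Type*} [Ring P]

structure IsOddDemazure (x : ℕ → P) (S : ℕ → P →+* P) (D : ℕ → AddMonoid.End P) (n : ℕ) :
    Prop where
  S_x : ∀ j, 1 ≤ j → j + 1 ≤ n → S j (x j) = x (j + 1)
  D_x : ∀ j i, 1 ≤ j → j + 1 ≤ n → 1 ≤ i → i ≤ n →
    D j (x i) = if i = j then 1 else if i = j + 1 then -1 else 0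
  D_mul : ∀ j, 1 ≤ j → j + 1 ≤ n → ∀ f g : P, D j (f * g) = D j f * g + S j f * D j g

namespace IsOddDemazure

variable {x : ℕ → P} {S : ℕ → P →+* P} {D : ℕ → AddMonoid.End P} {n : ℕ}

lemma shift (h : IsOddDemazure x S D (n + 1)) :
    IsOddDemazure (fun i => x (i + 1)) (fun j => S (j + 1)) (fun j => D (j + 1)) n where
  S_x j _ _ := h.S_x (j + 1) (by omega) (by omega)
  D_x j i _ _ _ _ := by
    simpa using h.D_x (j + 1) (i + 1) (by omega) (by omega) (by omega) (by omega)
  D_mul j _ _ := h.D_mul (j + 1) (by omega) (by omega)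

lemma D_one (h : IsOddDemazure x S D n) {j : ℕ} (hj : 1 ≤ j) (hjn : j + 1 ≤ n) :
    D j 1 = 0 := by
  simpa using h.D_mul j hj hjn 1 1

lemma D_pow_self (h : IsOddDemazure x S D n) {j : ℕ} (hj : 1 ≤ j) (hjn : j + 1 ≤ n) (a : ℕ) :
    D j (x j ^ a) = ∑ b ∈ Finset.range a, x (j + 1) ^ b * x j ^ (a - 1 - b) := by
  induction a with
  | zero => simpa using h.D_one hj hjn
  | succ a ih =>
    rw [pow_succ, h.D_mul j hj hjn, ih, h.D_x j j hj hjn hj (by omega), if_pos rfl, mul_one,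
      map_pow, h.S_x j hj hjn, ← sum_pow_mul_pow_succ, Nat.add_sub_cancel]

lemma D_mul_pow_of_ne (h : IsOddDemazure x S D n) {i j : ℕ} (hi : 1 ≤ i) (hin : i ≤ n)
    (hj : 1 ≤ j) (hjn : j + 1 ≤ n) (hij : i ≠ j) (hij' : i ≠ j + 1) (f : P) (c : ℕ) :
    D j (f * x i ^ c) = D j f * x i ^ c := by
  have hpow : D j (x i ^ c) = 0 := by
    induction c with
    | zero => simpa using h.D_one hj hjn
    | succ c ih =>
      rw [pow_succ, h.D_mul j hj hjn, ih, h.D_x j i hj hjn hi hin, if_neg hij, if_neg hij',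
        zero_mul, mul_zero, add_zero]
  rw [h.D_mul j hj hjn, hpow, mul_zero, add_zero]

lemma prod_apply_mul_pow (h : IsOddDemazure x S D n) {i : ℕ} (hi : 1 ≤ i) (hin : i ≤ n)
    {l : List ℕ} (hl : ∀ j ∈ l, 1 ≤ j ∧ j + 1 ≤ n ∧ i ≠ j ∧ i ≠ j + 1) (f : P) (c : ℕ) :
    (l.map D).prod (f * x i ^ c) = (l.map D).prod f * x i ^ c := by
  induction l generalizing f with
  | nil => rfl
  | cons j l ih =>
    obtain ⟨hj, hjn, hij, hij'⟩ := hl j List.mem_cons_self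
    rw [List.map_cons, List.prod_cons, AddMonoid.End.coe_mul, Function.comp_apply,
      Function.comp_apply, ih (fun j hj => hl j (List.mem_cons_of_mem _ hj)),
      h.D_mul_pow_of_ne hi hin hj hjn hij hij']

theorem descProd_apply_x_one_pow (h : IsOddDemazure x S D n) {len a : ℕ} (hlen : len < n)
    (ha : a ≤ len) : descProd D 1 len (x 1 ^ a) = if a = len then 1 else 0 := by
  induction len generalizing x S D n a with
  | zero =>
    obtain rfl : a = 0 := by omega
    simp [AddMonoid.End.coe_one]
  | succ len ih =>
    obtain ⟨m, rfl⟩ : ∃ m, n = m + 1 := ⟨n - 1, by omega⟩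
    have hchain : ∀ b ≤ len, descProd D 2 len (x 2 ^ b) = if b = len then 1 else 0 :=
      fun b hb => by simpa [descProd_shift] using ih h.shift (by omega) hb
    have hrange : ∀ j ∈ (List.range' 2 len).reverse,
        1 ≤ j ∧ j + 1 ≤ m + 1 ∧ 1 ≠ j ∧ 1 ≠ j + 1 := by
      intro j hj
      simp only [List.mem_reverse, List.mem_range'_1] at hj
      omega
    rw [descProd_add D 1 1 len, AddMonoid.End.coe_mul, Function.comp_apply]
    change descProd D 2 len (D 1 (x 1 ^ a)) = _
    rw [h.D_pow_self le_rfl (by omega), map_sum, ← sum_ite_mul_pow (x 1) ha]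
    refine Finset.sum_congr rfl fun b hb => ?_
    rw [Finset.mem_range] at hb
    rw [← prod_map_range'_reverse, h.prod_apply_mul_pow le_rfl (by omega) hrange,
      prod_map_range'_reverse, hchain b (by omega)]

theorem omegaProd_apply_xiMonomial (h : IsOddDemazure x S D n) :
    omegaProd D n (xiMonomial x n) = 1 := by
  induction n generalizing x S D with
  | zero => rfl
  | succ n ih =>
    have hrange : ∀ j ∈ (omegaWord n).map (· + 1),
        1 ≤ j ∧ j + 1 ≤ n + 1 ∧ 1 ≠ j ∧ 1 ≠ j + 1 := by
      intro j hj
      obtain ⟨j, hj', rfl⟩ := List.mem_map.1 hj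
      have := mem_omegaWord hj'
      omega
    have hσ : omegaProd (fun j => D (j + 1)) n = (((omegaWord n).map (· + 1)).map D).prod := by
      rw [List.map_map]
      rfl
    rw [omegaProd_succ, xiMonomial_succ, AddMonoid.End.coe_mul, Function.comp_apply, hσ,
      h.prod_apply_mul_pow le_rfl (by omega) hrange, ← hσ, ih h.shift, one_mul,
      h.descProd_apply_x_one_pow (Nat.lt_succ_self n) le_rfl, if_pos rfl]

end IsOddDemazure

end Polynomial

end OddNilHecke

/-- In `ONH_n`, with `ω_n = τ_{n-1} ⋯ τ_1 σ_1(ω_{n-1})` and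
`ξ_n = x_{n-1} x_{n-2}² ⋯ x_1^{n-1}`, one has `ω_n · ξ_n = 1` in the polynomial
representation (first conjunct, formalized for any family of odd variables with odd
Demazure operators `D j` satisfying their defining properties), and consequently
`ω_n ξ_n ω_n = ω_n` in `ONH_n`, so that `ξ_n ω_n` and `ω_n ξ_n` are idempotents
(second conjunct, formalized in any algebra with elements `X i, T j` satisfying the
defining relations of `ONH_n`). -/
theorem statement15 (k : Type*) [Field k] (n : ℕ) :
    (∀ (P : Type) [Ring P] [Algebra k P],
      ∀ (x : ℕ → P) (S : ℕ → P ≃ₐ[k] P) (D : ℕ → AddMonoid.End P),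
        (∀ i j : ℕ, 1 ≤ i → i < j → j ≤ n → x j * x i = -(x i * x j)) →
        (∀ j, 1 ≤ j → j + 1 ≤ n → S j (x j) = x (j + 1)) →
        (∀ j, 1 ≤ j → j + 1 ≤ n → S j (x (j + 1)) = x j) →
        (∀ j i, 1 ≤ j → j + 1 ≤ n → 1 ≤ i → i ≤ n → i ≠ j → i ≠ j + 1 →
          S j (x i) = -x i) →
        (∀ j i, 1 ≤ j → j + 1 ≤ n → 1 ≤ i → i ≤ n →
          D j (x i) = if i = j then 1 else if i = j + 1 then -1 else 0) →
        (∀ j, 1 ≤ j → j + 1 ≤ n → ∀ f g : P, D j (f * g) = D j f * g + S j f * D j g) →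
        (((omegaWord n).map D).prod)
            (((List.range (n - 1)).map fun i => x (n - 1 - i) ^ (i + 1)).prod) = 1) ∧
      ∀ (A : Type) [Ring A] [Algebra k A], ∀ X T : ℕ → A,
        (∀ i j : ℕ, 1 ≤ i → i < j → j ≤ n → X j * X i = -(X i * X j)) →
        (∀ i j : ℕ, 1 ≤ i → 1 ≤ j → i + 1 < j → j + 1 ≤ n → T i * T j = -(T j * T i)) →
        (∀ i j : ℕ, 1 ≤ i → i ≤ n → 1 ≤ j → j + 1 ≤ n → i ≠ j → i ≠ j + 1 →
          X i * T j = -(T j * X i)) →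
        (∀ j, 1 ≤ j → j + 1 ≤ n → T j * T j = 0) →
        (∀ j, 1 ≤ j → j + 2 ≤ n →
          T j * T (j + 1) * T j = -(T (j + 1) * T j * T (j + 1))) →
        (∀ j, 1 ≤ j → j + 1 ≤ n → X j * T j - T j * X (j + 1) = 1) →
        (∀ j, 1 ≤ j → j + 1 ≤ n → T j * X j - X (j + 1) * T j = 1) →
        (let ω : A := ((omegaWord n).map T).prod;
         let ξ : A := ((List.range (n - 1)).map fun i => X (n - 1 - i) ^ (i + 1)).prod;
         ω * ξ * ω = ω ∧ (ξ * ω) * (ξ * ω) = ξ * ω ∧ (ω * ξ) * (ω * ξ) = ω * ξ) := by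
  refine ⟨fun P _ _ x S D _ hS _ _ hD hmul => ?_, fun A _ _ X T _ hTT hXT hT2 hbraid _ hTX => ?_⟩
  · exact OddNilHecke.IsOddDemazure.omegaProd_apply_xiMonomial (S := fun j => (S j : P →+* P))
      ⟨hS, hD, hmul⟩
  · intro ω ξ
    have hωξω : ω * ξ * ω = ω :=
      OddNilHecke.omegaProd_mul_xiMonomial_mul_omegaProd ⟨⟨hTT, hT2, hbraid⟩, hXT, hTX⟩
    exact ⟨hωξω, by rw [mul_assoc, ← mul_assoc ω, hωξω], by rw [← mul_assoc, hωξω]⟩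
end
end

section
/- Let OSym_{n+1} be the algebra of odd symmetric polynomials in x_1,…,x_{n+1}. For any 0 ≤ p,q,k ≤ n with p+q ≤ n, one has Σ_{m=1}^{n-p-q} (-1)^{(n+k)(m+p+k)} e_{n-k+m}^{(n+1)} e_{n-p-q-m}^{(n+1)} = Σ_{m=1}^{n-p-q} (-1)^{(n+k)(m+q)} e_{n-p-q-m}^{(n+1)} e_{n-k+m}^{(n+1)}. -/
/-!
Adjoining an anticommuting variable `a` in front of `y` gives
`e_{r+1}(a, y) = a e_r(y) + e_{r+1}(y)` and `e_r(y) a = (-1)^r a e_r(y)`; with these, the defining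
relations of `OSym` pass from `N` to `N + 1` variables by a direct computation, starting from the
trivial case `N = 0`.

Put `a = n - k`, `N = n - p - q` and `ε = (-1)^a = (-1)^(n+k)`. If `a + N` is even, the two sums
agree termwise: the signs agree and `e_{a+m}` commutes with `e_{N-m}`. If `a + N` is odd, the
second relation at `(r, s) = (a + m, N - m - 1)` makes the difference of the `m`-th terms cancel
that of the `(m+1)`-st ones for odd `m`, so the difference of the sums cancels in consecutive
pairs; an unpaired last term `m = N` involves `e_0 = 1` and vanishes.
-/

noncomputable section

/-- The odd elementary symmetric polynomial
`e_r = ∑_{i_1 < ⋯ < i_r} x_{i_1} ⋯ x_{i_r}` in the (odd, anticommuting)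
variables `x`. -/
def oddElem {A : Type*} [Ring A] {N : ℕ} (x : Fin N → A) (r : ℕ) : A :=
  ∑ s ∈ Finset.powersetCard r (Finset.univ : Finset (Fin N)),
    ((s.sort (· ≤ ·)).map x).prod

open Finset

section

variable {A : Type*} [Ring A]

theorem List.prod_mul_of_anticommute (a : A) :
    ∀ l : List A, (∀ b ∈ l, b * a = -(a * b)) → l.prod * a = (-1) ^ l.length * (a * l.prod)
  | [], _ => by simp
  | b :: l, h => by
    have hb : b * a = -(a * b) := h b List.mem_cons_self
    have hl := List.prod_mul_of_anticommute a l fun c hc => h c (List.mem_cons_of_mem b hc)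
    have hσ : (-1 : A) ^ l.length * b = b * (-1) ^ l.length :=
      ((Commute.neg_one_left b).pow_left _).eq
    rw [List.prod_cons, List.length_cons, pow_succ]
    linear_combination (norm := noncomm_ring) b * hl - hσ * (a * l.prod) +
      (-1) ^ l.length * hb * l.prod

theorem oddElem_zero {N : ℕ} (x : Fin N → A) : oddElem x 0 = 1 := by
  simp [oddElem]

theorem oddElem_of_lt {N : ℕ} (x : Fin N → A) {r : ℕ} (h : N < r) : oddElem x r = 0 := by
  rw [oddElem, powersetCard_eq_empty.mpr (by simpa using h), sum_empty]

theorem oddElem_succ {N : ℕ} (x : Fin (N + 1) → A) (r : ℕ) :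
    oddElem x (r + 1) = x 0 * oddElem (Fin.tail x) r + oddElem (Fin.tail x) (r + 1) := by
  classical
  have huniv : (univ : Finset (Fin (N + 1))) = insert 0 (univ.map (Fin.succEmb N)) := by
    rw [Fin.univ_succ, cons_eq_insert]; rfl
  have h0 : (0 : Fin (N + 1)) ∉ univ.map (Fin.succEmb N) := by simp
  have hsort (t : Finset (Fin N)) :
      ((t.map (Fin.succEmb N)).sort (· ≤ ·)).map x = (t.sort (· ≤ ·)).map (Fin.tail x) := by
    rw [← (Fin.strictMono_succ.strictMonoOn _).map_finsetSort, List.map_map]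
    rfl
  rw [oddElem, huniv, powersetCard_succ_insert h0, sum_union, sum_image, add_comm,
    powersetCard_map, powersetCard_map, sum_map, sum_map, oddElem, oddElem, mul_sum]
  · congr 1 <;> refine sum_congr rfl fun t _ => ?_
    · rw [RelEmbedding.coe_toEmbedding, mapEmbedding_apply, sort_insert, List.map_cons,
        List.prod_cons, hsort]
      · simp
      · simp
    · rw [RelEmbedding.coe_toEmbedding, mapEmbedding_apply, hsort]
  · exact fun u hu v hv h => by
      rw [← erase_insert (fun h' => h0 ((mem_powersetCard.mp hu).1 h')),
        ← erase_insert (fun h' => h0 ((mem_powersetCard.mp hv).1 h')), h]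
  · exact disjoint_left.mpr fun u hu hu' => by
      obtain ⟨t, _, rfl⟩ := mem_image.mp hu'
      exact h0 ((mem_powersetCard.mp hu).1 (mem_insert_self 0 t))

theorem oddElem_mul_of_anticommute {N : ℕ} (x : Fin N → A) {a : A}
    (ha : ∀ i, x i * a = -(a * x i)) (r : ℕ) :
    oddElem x r * a = (-1) ^ r * (a * oddElem x r) := by
  rw [oddElem, sum_mul, mul_sum, mul_sum]
  refine sum_congr rfl fun s hs => ?_
  rw [List.prod_mul_of_anticommute a _ (by simpa using fun i _ => ha i), List.length_map,
    length_sort, (mem_powersetCard.mp hs).2]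

/-- The relations of `OSym`, the second one with `s` shifted to `s + 1`. -/
structure OSymRelations (e : ℕ → A) : Prop where
  commute : ∀ r s, r % 2 = s % 2 → Commute (e r) (e s)
  exchange : ∀ r s, r % 2 = s % 2 →
    e r * e (s + 1) + (-1) ^ r * (e (s + 1) * e r) = (-1) ^ r * (e (r + 1) * e s) + e s * e (r + 1)

def consElem (a : A) (e : ℕ → A) : ℕ → A
  | 0 => 1
  | j + 1 => a * e j + e (j + 1)

@[simp]
theorem consElem_zero (a : A) (e : ℕ → A) : consElem a e 0 = 1 := rfl

theorem oddElem_eq_consElem {N : ℕ} (x : Fin (N + 1) → A) :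
    oddElem x = consElem (x 0) (oddElem (Fin.tail x)) := by
  funext r
  cases r with
  | zero => exact oddElem_zero x
  | succ r => exact oddElem_succ x r

section consElem

variable {a : A} {e : ℕ → A}

theorem consElem_succ_mul_succ (ha : ∀ j, e j * a = (-1) ^ j * (a * e j)) (r s : ℕ) :
    consElem a e (r + 1) * consElem a e (s + 1) =
      a * (a * ((-1) ^ r * (e r * e s))) + a * (e r * e (s + 1))
        - a * ((-1) ^ r * (e (r + 1) * e s)) + e (r + 1) * e (s + 1) := by
  have hσ : (-1 : A) ^ r * a = a * (-1) ^ r := ((Commute.neg_one_left a).pow_left r).eq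
  have hsucc : (-1 : A) ^ (r + 1) = -(-1) ^ r := by rw [pow_succ, mul_neg_one]
  linear_combination (norm := skip) a * ha r * e s + a * hσ * (e r * e s) + ha (r + 1) * e s -
    hσ * (e (r + 1) * e s)
  simp only [consElem, hsucc]
  noncomm_ring

namespace OSymRelations

variable (he : OSymRelations e) (ha : ∀ j, e j * a = (-1) ^ j * (a * e j))
include he ha

theorem commute_consElem {r s : ℕ} (h : r % 2 = s % 2) :
    Commute (consElem a e r) (consElem a e s) := by
  rcases r with _ | r
  · exact Commute.one_left _
  rcases s with _ | s
  · exact Commute.one_right _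
  have hrs : r % 2 = s % 2 := by omega
  have hσ : (-1 : A) ^ s = (-1) ^ r := neg_one_pow_congr (by simp only [Nat.even_iff]; omega)
  rw [Commute, SemiconjBy, consElem_succ_mul_succ ha, consElem_succ_mul_succ ha, hσ]
  linear_combination (norm := noncomm_ring) a * a * (-1 : A) ^ r * (he.commute r s hrs).eq +
    a * he.exchange r s hrs + (he.commute (r + 1) (s + 1) (by omega)).eq

theorem consElem_one_mul_add (he0 : e 0 = 1) {j : ℕ} (hj : j % 2 = 0) :
    consElem a e 1 * consElem a e j + consElem a e j * consElem a e 1 =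
      consElem a e (j + 1) + consElem a e (j + 1) := by
  rcases j with _ | j
  · simp [consElem]
  have hσ : (-1 : A) ^ j = -1 := Odd.neg_one_pow (Nat.odd_iff.mpr (by omega))
  have hx := he.exchange 0 (j + 1) (by omega)
  rw [consElem_succ_mul_succ ha, consElem_succ_mul_succ ha, hσ]
  simp only [consElem, he0, pow_zero] at hx ⊢
  linear_combination (norm := noncomm_ring) -hx + a * (he.commute j 1 (by omega)).eq

theorem exchange_consElem_succ {r s : ℕ} (h : r % 2 = s % 2) :
    consElem a e (r + 1) * consElem a e (s + 2) +
        (-1) ^ (r + 1) * (consElem a e (s + 2) * consElem a e (r + 1)) =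
      (-1) ^ (r + 1) * (consElem a e (r + 2) * consElem a e (s + 1)) +
        consElem a e (s + 1) * consElem a e (r + 2) := by
  have hexch_succ := he.exchange (r + 1) (s + 1) (by omega)
  have hexch_swap := he.exchange s r h.symm
  have hcomm := (he.commute r (s + 2) (by omega)).eq
  have hcomm_swap := (he.commute s (r + 2) (by omega)).eq
  have hs : (-1 : A) ^ s = (-1) ^ r := neg_one_pow_congr (by simp only [Nat.even_iff]; omega)
  rw [consElem_succ_mul_succ ha, consElem_succ_mul_succ ha, consElem_succ_mul_succ ha,
    consElem_succ_mul_succ ha]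
  simp only [pow_succ, hs] at hexch_succ hexch_swap ⊢
  linear_combination (norm := skip)
    hexch_succ - a * a * (-1 : A) ^ r * hexch_swap + a * hcomm - a * hcomm_swap
  rcases neg_one_pow_eq_or A r with hσ | hσ <;> simp only [hσ] <;> noncomm_ring

end OSymRelations

theorem consElem_osymRelations (he : OSymRelations e) (he0 : e 0 = 1)
    (ha : ∀ j, e j * a = (-1) ^ j * (a * e j)) : OSymRelations (consElem a e) where
  commute _ _ h := he.commute_consElem ha h
  exchange r s h := by
    rcases r with _ | r
    · simp only [consElem_zero, pow_zero, one_mul, mul_one, zero_add]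
      exact (he.consElem_one_mul_add ha he0 (by omega)).symm
    rcases s with _ | s
    · simp only [Even.neg_one_pow (Nat.even_iff.mpr (by omega) : Even (r + 1)), consElem_zero,
        one_mul, mul_one, zero_add]
      rw [add_comm]
      exact he.consElem_one_mul_add ha he0 (by omega)
    · exact he.exchange_consElem_succ ha (by omega)

end consElem

theorem oddElem_osymRelations :
    ∀ {N : ℕ} (x : Fin N → A), (∀ i j, i < j → x j * x i = -(x i * x j)) →
      OSymRelations (oddElem x)
  | 0, x, _ =>
    have hvanish (r : ℕ) : oddElem x (r + 1) = 0 := oddElem_of_lt x (Nat.succ_pos r)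
    { commute := fun r s _ => by
        rcases r with _ | r
        · exact oddElem_zero x ▸ Commute.one_left _
        · exact hvanish r ▸ Commute.zero_left _
      exchange := fun r s _ => by simp only [hvanish, mul_zero, zero_mul, add_zero] }
  | N + 1, x, hx => by
    rw [oddElem_eq_consElem]
    exact consElem_osymRelations
      (oddElem_osymRelations (Fin.tail x) fun i j hij =>
        hx i.succ j.succ (Fin.succ_lt_succ_iff.mpr hij))
      (oddElem_zero _)
      (oddElem_mul_of_anticommute _ fun i => hx 0 i.succ (Fin.succ_pos i))

theorem sum_Icc_eq_zero_of_pairs {M : Type*} [AddCommMonoid M] (g : ℕ → M) (N : ℕ)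
    (hpair : ∀ m, m % 2 = 1 → m < N → g m + g (m + 1) = 0) (hlast : N % 2 = 1 → g N = 0) :
    ∑ m ∈ Icc 1 N, g m = 0 := by
  have heven : ∀ M, 2 * M ≤ N → ∑ m ∈ Icc 1 (2 * M), g m = 0 := by
    intro M
    induction M with
    | zero => simp
    | succ M ih =>
      intro hM
      rw [show 2 * (M + 1) = 2 * M + 1 + 1 by ring, sum_Icc_succ_top (by omega),
        sum_Icc_succ_top (by omega), ih (by omega), zero_add]
      exact hpair (2 * M + 1) (by omega) (by omega)
  obtain ⟨M, hN | hN⟩ : ∃ M, N = 2 * M ∨ N = 2 * M + 1 := ⟨N / 2, by omega⟩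
  · exact hN ▸ heven M hN.ge
  · rw [hN, sum_Icc_succ_top (by omega), heven M (by omega), ← hN, hlast (by omega), add_zero]

namespace OSymRelations

variable {e : ℕ → A} (he : OSymRelations e) (he0 : e 0 = 1)
include he he0

theorem sum_Icc_signed_eq_zero {a N : ℕ} (h : (a + N) % 2 = 1) :
    ∑ m ∈ Icc 1 N,
      ((-1 : A) ^ a) ^ m * (e (a + m) * e (N - m) - (-1) ^ a * (e (N - m) * e (a + m))) = 0 := by
  apply sum_Icc_eq_zero_of_pairs
  · intro m hm hmN
    have hx := he.exchange (a + m) (N - m - 1) (by omega)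
    rw [show N - m - 1 + 1 = N - m by omega, show a + m + 1 = a + (m + 1) by omega,
      show N - m - 1 = N - (m + 1) by omega, pow_add, Odd.neg_one_pow (Nat.odd_iff.mpr hm)] at hx
    rw [pow_right_comm _ a m, pow_right_comm _ a (m + 1), Odd.neg_one_pow (Nat.odd_iff.mpr hm),
      Even.neg_one_pow (n := m + 1) (Nat.even_iff.mpr (by omega)), one_pow]
    linear_combination (norm := skip) (-1 : A) ^ a * hx
    rcases neg_one_pow_eq_or A a with hσ | hσ <;> simp only [hσ] <;> noncomm_ring
  · intro hN
    rw [Nat.sub_self, he0, Even.neg_one_pow (Nat.even_iff.mpr (by omega)), one_mul, mul_one,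
      one_mul, sub_self, mul_zero]

theorem sum_Icc_neg_one_pow_mul_eq {a N i j : ℕ} (h : (a + N) % 2 = (i + j) % 2) :
    ∑ m ∈ Icc 1 N, ((-1 : A) ^ a) ^ (m + i) * (e (a + m) * e (N - m)) =
      ∑ m ∈ Icc 1 N, ((-1 : A) ^ a) ^ (m + j) * (e (N - m) * e (a + m)) := by
  have hpow (t t' : ℕ) (ht : t % 2 = t' % 2) : ((-1 : A) ^ a) ^ t = ((-1) ^ a) ^ t' := by
    rw [pow_right_comm _ a t, pow_right_comm _ a t',
      neg_one_pow_congr (m := t) (n := t') (by simp only [Nat.even_iff]; omega)]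
  rcases Nat.mod_two_eq_zero_or_one (a + N) with heven | hodd
  · refine sum_congr rfl fun m hm => ?_
    rw [hpow (m + i) (m + j) (by omega), (he.commute _ _ (by have := mem_Icc.mp hm; omega)).eq]
  rw [← sub_eq_zero, ← sum_sub_distrib]
  calc _ = ∑ m ∈ Icc 1 N, ((-1 : A) ^ a) ^ i *
        (((-1 : A) ^ a) ^ m * (e (a + m) * e (N - m) - (-1) ^ a * (e (N - m) * e (a + m)))) := by
        refine sum_congr rfl fun m _ => ?_
        rw [hpow (m + j) (i + m + 1) (by omega), add_comm m i, pow_succ, pow_add]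
        noncomm_ring
    _ = 0 := by rw [← mul_sum, he.sum_Icc_signed_eq_zero he0 hodd, mul_zero]

end OSymRelations

end

theorem statement16_general {A : Type*} [Ring A] (n : ℕ) (x : Fin (n + 1) → A)
    (hx : ∀ i j : Fin (n + 1), i < j → x j * x i = -(x i * x j))
    (p q k : ℕ) (hk : k ≤ n) (hpq : p + q ≤ n) :
    ∑ m ∈ Finset.Icc 1 (n - p - q),
        (-1 : A) ^ ((n + k) * (m + p + k)) *
          (oddElem x (n - k + m) * oddElem x (n - p - q - m)) =
      ∑ m ∈ Finset.Icc 1 (n - p - q),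
        (-1 : A) ^ ((n + k) * (m + q)) *
          (oddElem x (n - p - q - m) * oddElem x (n - k + m)) := by
  have hsign (t : ℕ) : (-1 : A) ^ ((n + k) * t) = ((-1) ^ (n - k)) ^ t := by
    rw [pow_mul, neg_one_pow_congr (m := n + k) (n := n - k) (by simp only [Nat.even_iff]; omega)]
  simp only [hsign, add_assoc]
  exact (oddElem_osymRelations x hx).sum_Icc_neg_one_pow_mul_eq (oddElem_zero x) (by omega)

/-- In `OSym_{n+1}` (the algebra of odd symmetric polynomials, formalized inside any
algebra with `n+1` anticommuting odd variables): for `0 ≤ p, q, k ≤ n` with `p + q ≤ n`,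
`∑_{m=1}^{n-p-q} (-1)^{(n+k)(m+p+k)} e_{n-k+m} e_{n-p-q-m}
  = ∑_{m=1}^{n-p-q} (-1)^{(n+k)(m+q)} e_{n-p-q-m} e_{n-k+m}`. -/
theorem statement16 {A : Type*} [Ring A] (n : ℕ) (x : Fin (n + 1) → A)
    (hx : ∀ i j : Fin (n + 1), i < j → x j * x i = -(x i * x j))
    (p q k : ℕ) (hp : p ≤ n) (hq : q ≤ n) (hk : k ≤ n) (hpq : p + q ≤ n) :
    ∑ m ∈ Finset.Icc 1 (n - p - q),
        (-1 : A) ^ ((n + k) * (m + p + k)) *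
          (oddElem x (n - k + m) * oddElem x (n - p - q - m)) =
      ∑ m ∈ Finset.Icc 1 (n - p - q),
        (-1 : A) ^ ((n + k) * (m + q)) *
          (oddElem x (n - p - q - m) * oddElem x (n - k + m)) :=
  statement16_general n x hx p q k hk hpq
end
end
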